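/- arXiv:2406.14876 — 10 statements merged into one kernel-verified Lean document; each statement's English description precedes it below -/
import Mathlib

section
/- Let E = ℝ^d with the Euclidean norm, let F : E × E → ℝ be smooth and satisfy conditions (i) and (ii) with constants L ≤ M < 0 and 0 ≤ M' < −M. Then for every step size η with 0 < η < −1/(2L), setting β := 1 + η·M + η·M', one has 0 < β < 1, and for all u₁, u₁', u₂, u₂' ∈ E with ‖u₂ − u₁‖ ≤ ‖u₂' − u₁'‖, the partial derivative steps satisfy ‖PD_F(u₂; u₂', η) − PD_F(u₁; u₁', η)‖ ≤ β·‖u₂' − u₁'‖. -/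
open RealInnerProductSpace InnerProductSpace

theorem pd_aux_opNorm_le_of_symm {E : Type*} [NormedAddCommGroup E] [InnerProductSpace ℝ E]
    (B : E →L[ℝ] E) (b : ℝ) (hb : 0 ≤ b)
    (hsymm : ∀ x y : E, ⟪B x, y⟫ = ⟪x, B y⟫)
    (hbound : ∀ v : E, |⟪B v, v⟫| ≤ b * ‖v‖ ^ 2) : ‖B‖ ≤ b := by
  refine B.opNorm_le_bound hb fun x => ?_
  rcases eq_or_ne (B x) 0 with h0 | h0
  · rw [h0, norm_zero]; positivity
  have hx0 : x ≠ 0 := by rintro rfl; simp at h0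
  have hBx : (0:ℝ) < ‖B x‖ := norm_pos_iff.mpr h0
  have hxn : (0:ℝ) < ‖x‖ := norm_pos_iff.mpr hx0
  set y := (‖x‖ / ‖B x‖) • B x with hy
  have hynorm : ‖y‖ = ‖x‖ := by
    rw [hy, norm_smul, Real.norm_eq_abs, abs_of_nonneg (by positivity),
      div_mul_cancel₀ _ hBx.ne']
  have h1 : ⟪B x, y⟫ = ‖x‖ * ‖B x‖ := by
    rw [hy, real_inner_smul_right, real_inner_self_eq_norm_sq]
    field_simp
  have hsy : ⟪(B y : E), x⟫ = ⟪B x, y⟫ := by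
    rw [hsymm y x, real_inner_comm]
  have hpol : 4 * ⟪B x, y⟫ = ⟪B (x + y), x + y⟫ - ⟪B (x - y), x - y⟫ := by
    simp only [map_add, map_sub, inner_add_left, inner_add_right, inner_sub_left,
      inner_sub_right]
    linarith [hsy]
  have h2 := (abs_le.1 (hbound (x + y))).2
  have h3 := (abs_le.1 (hbound (x - y))).1
  have hpar : ‖x + y‖ ^ 2 + ‖x - y‖ ^ 2 = 2 * (‖x‖ ^ 2 + ‖y‖ ^ 2) := by
    have := parallelogram_law_with_norm ℝ x y
    nlinarith [this]
  have h4 : 4 * (‖x‖ * ‖B x‖) ≤ 4 * (b * ‖x‖ ^ 2) := by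
    have h5 : b * (‖x + y‖ ^ 2 + ‖x - y‖ ^ 2) = 4 * (b * ‖x‖ ^ 2) := by
      rw [hpar, hynorm]; ring
    rw [← h1]
    nlinarith [hpol, h2, h3, h5]
  nlinarith [h4, hxn]

/-- The canonical real-linear isometry from the dual of a real inner product space. -/
noncomputable def pdDualIso (E : Type*) [NormedAddCommGroup E] [InnerProductSpace ℝ E]
    [CompleteSpace E] : StrongDual ℝ E ≃ₗᵢ[ℝ] E where
  toLinearEquiv :=
    { toFun := fun φ => (toDual ℝ E).symm φ
      invFun := fun x => toDual ℝ E x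
      map_add' := fun φ ψ => by simp
      map_smul' := fun c φ => by simp
      left_inv := fun φ => (toDual ℝ E).apply_symm_apply φ
      right_inv := fun x => (toDual ℝ E).symm_apply_apply x }
  norm_map' := fun φ => (toDual ℝ E).symm.norm_map φ

theorem pdDualIso_inner {E : Type*} [NormedAddCommGroup E] [InnerProductSpace ℝ E]
    [CompleteSpace E] (φ : StrongDual ℝ E) (z : E) :
    ⟪pdDualIso E φ, z⟫ = φ z :=
  toDual_symm_apply

theorem pd_gradient_eq {E : Type*} [NormedAddCommGroup E] [InnerProductSpace ℝ E]
    [CompleteSpace E] (f : E → ℝ) (x : E) :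
    gradient f x = pdDualIso E (fderiv ℝ f x) := rfl

/-- Lipschitz bound in the first variable. -/
theorem pd_lip_first {E : Type*} [NormedAddCommGroup E] [InnerProductSpace ℝ E]
    [CompleteSpace E] (f : E → ℝ) (hf : ContDiff ℝ (⊤ : ℕ∞) f) (η b : ℝ) (hb : 0 ≤ b)
    (hquad : ∀ u v : E, |‖v‖ ^ 2 + η * iteratedFDeriv ℝ 2 f u ![v, v]| ≤ b * ‖v‖ ^ 2)
    (x y : E) :
    ‖(x + η • gradient f x) - (y + η • gradient f y)‖ ≤ b * ‖x - y‖ := by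
  have hdf : Differentiable ℝ f := hf.differentiable (by simp)
  have hdf' : Differentiable ℝ (fderiv ℝ f) :=
    (hf.fderiv_right (m := (⊤ : ℕ∞)) (by simp)).differentiable (by simp)
  set g : E → E := fun u => u + η • gradient f u with hgdef
  set T : StrongDual ℝ E →L[ℝ] E := ((pdDualIso E : StrongDual ℝ E ≃ₗᵢ[ℝ] E) :
    StrongDual ℝ E →L[ℝ] E) with hTdef
  set C : E → (E →L[ℝ] E) := fun u =>
    ContinuousLinearMap.id ℝ E + η • (T.comp (fderiv ℝ (fderiv ℝ f) u)) with hCdef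
  have hgrad : ∀ u : E, HasFDerivAt (fun u => gradient f u)
      (T.comp (fderiv ℝ (fderiv ℝ f) u)) u := by
    intro u
    have h2 : HasFDerivAt (fderiv ℝ f) (fderiv ℝ (fderiv ℝ f) u) u := (hdf' u).hasFDerivAt
    exact (pdDualIso E).comp_hasFDerivAt_iff.mpr h2
  have hg : ∀ u : E, HasFDerivAt g (C u) u := fun u =>
    (hasFDerivAt_id u).add ((hgrad u).const_smul η)
  have hTapp : ∀ (φ : StrongDual ℝ E) (z : E), ⟪T φ, z⟫ = φ z := fun φ z =>
    pdDualIso_inner φ z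
  have hinner : ∀ u v w : E, ⟪(C u) v, w⟫ = ⟪v, w⟫ + η * (fderiv ℝ (fderiv ℝ f) u v w) := by
    intro u v w
    simp only [hCdef, ContinuousLinearMap.add_apply, ContinuousLinearMap.id_apply,
      ContinuousLinearMap.smul_apply, ContinuousLinearMap.comp_apply,
      inner_add_left, real_inner_smul_left]
    rw [hTapp]
  have hsymD2 : ∀ u v w : E, fderiv ℝ (fderiv ℝ f) u v w = fderiv ℝ (fderiv ℝ f) u w v :=
    fun u v w => second_derivative_symmetric (fun y => (hdf y).hasFDerivAt)
      (hdf' u).hasFDerivAt v w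
  have hquad' : ∀ u v : E, fderiv ℝ (fderiv ℝ f) u v v = iteratedFDeriv ℝ 2 f u ![v, v] := by
    intro u v
    rw [iteratedFDeriv_two_apply]
    simp
  have hnorm : ∀ u : E, ‖C u‖ ≤ b := by
    intro u
    refine pd_aux_opNorm_le_of_symm (C u) _ hb (fun v w => ?_) (fun v => ?_)
    · calc ⟪(C u) v, w⟫ = ⟪v, w⟫ + η * (fderiv ℝ (fderiv ℝ f) u v w) := hinner u v w
      _ = ⟪w, v⟫ + η * (fderiv ℝ (fderiv ℝ f) u w v) := by
          rw [real_inner_comm, hsymD2 u v w]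
      _ = ⟪(C u) w, v⟫ := (hinner u w v).symm
      _ = ⟪v, (C u) w⟫ := real_inner_comm _ _
    · have : ⟪(C u) v, v⟫ = ‖v‖ ^ 2 + η * iteratedFDeriv ℝ 2 f u ![v, v] := by
        rw [hinner u v v, real_inner_self_eq_norm_sq, hquad']
      rw [this]
      exact hquad u v
  have := convex_univ.norm_image_sub_le_of_norm_fderiv_le
    (f := g) (fun u _ => (hg u).differentiableAt)
    (fun u _ => by rw [(hg u).fderiv]; exact hnorm u)
    (Set.mem_univ y) (Set.mem_univ x)
  simpa [hgdef] using this

/-- Joint smoothness of the partial gradient map. -/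
theorem pd_grad_smooth {E : Type*} [NormedAddCommGroup E] [InnerProductSpace ℝ E]
    [CompleteSpace E] {F : E × E → ℝ} (hF : ContDiff ℝ (⊤ : ℕ∞) F) :
    ContDiff ℝ (⊤ : ℕ∞) (fun p : E × E => gradient (fun w => F (w, p.2)) p.1) := by
  have hf : ContDiff ℝ (⊤ : ℕ∞) (Function.uncurry fun (p : E × E) (w : E) => F (w, p.2)) := by
    unfold Function.uncurry
    exact hF.comp (contDiff_snd.prodMk (contDiff_snd.comp contDiff_fst))
  have h1 : ContDiff ℝ (⊤ : ℕ∞) (fun p : E × E => fderiv ℝ (fun w => F (w, p.2)) p.1) :=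
    hf.fderiv contDiff_fst (by simp)
  exact (pdDualIso E).contDiff.comp h1

/-- contraction property of the partial derivative step
`PD_F(u; u', η) = u + η • ∇₁F(u, u')` under the Hessian bounds (i) and the
cross-derivative bound (ii). -/
theorem pd_step_contraction (d : ℕ)
    (F : (EuclideanSpace ℝ (Fin d)) × (EuclideanSpace ℝ (Fin d)) → ℝ)
    (hF : ContDiff ℝ (⊤ : ℕ∞) F)
    (L M M' : ℝ) (hLM : L ≤ M) (hM0 : M < 0) (hM'0 : 0 ≤ M') (hM' : M' < -M)
    (hHessLower : ∀ u u' v : EuclideanSpace ℝ (Fin d),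
      L * ‖v‖ ^ 2 ≤ iteratedFDeriv ℝ 2 (fun w => F (w, u')) u ![v, v])
    (hHessUpper : ∀ u u' v : EuclideanSpace ℝ (Fin d),
      iteratedFDeriv ℝ 2 (fun w => F (w, u')) u ![v, v] ≤ M * ‖v‖ ^ 2)
    (hCross : ∀ u u' : EuclideanSpace ℝ (Fin d),
      ‖fderiv ℝ (fun w' => gradient (fun w => F (w, w')) u) u'‖ ≤ M')
    (η : ℝ) (hη0 : 0 < η) (hη : η < -1 / (2 * L)) :
    (0 < 1 + η * M + η * M' ∧ 1 + η * M + η * M' < 1) ∧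
    ∀ u₁ u₁' u₂ u₂' : EuclideanSpace ℝ (Fin d),
      ‖u₂ - u₁‖ ≤ ‖u₂' - u₁'‖ →
      ‖(u₂ + η • gradient (fun w => F (w, u₂')) u₂) -
          (u₁ + η • gradient (fun w => F (w, u₁')) u₁)‖ ≤
        (1 + η * M + η * M') * ‖u₂' - u₁'‖ := by
  have hL0 : L < 0 := lt_of_le_of_lt hLM hM0
  have hηL : -1/2 < η * L := by
    have h2L : 2 * L < 0 := by linarith
    have h := mul_lt_mul_of_neg_right hη h2L
    rw [div_mul_cancel₀ _ h2L.ne] at h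
    have he : η * (2 * L) = 2 * (η * L) := by ring
    linarith [he ▸ h]
  have hηM : 0 < 1 + η * M := by nlinarith [mul_le_mul_of_nonneg_left hLM hη0.le]
  have hβpos : 0 < 1 + η * M + η * M' := by nlinarith
  have hβlt : 1 + η * M + η * M' < 1 := by nlinarith
  refine ⟨⟨hβpos, hβlt⟩, ?_⟩
  intro u₁ u₁' u₂ u₂' hle
  -- Part 1 with c := u₂'
  have hf₁ : ContDiff ℝ (⊤ : ℕ∞) (fun w => F (w, u₂')) := hF.comp (contDiff_id.prodMk contDiff_const)
  have hquad : ∀ u v : EuclideanSpace ℝ (Fin d),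
      |‖v‖ ^ 2 + η * iteratedFDeriv ℝ 2 (fun w => F (w, u₂')) u ![v, v]|
        ≤ (1 + η * M) * ‖v‖ ^ 2 := by
    intro u v
    have hu := hHessUpper u u₂' v
    have hl := hHessLower u u₂' v
    have h1 := mul_le_mul_of_nonneg_left hu hη0.le
    have h2 := mul_le_mul_of_nonneg_left hl hη0.le
    rw [abs_le]
    constructor
    · nlinarith [sq_nonneg ‖v‖]
    · nlinarith
  have p1 := pd_lip_first (fun w => F (w, u₂')) hf₁ η (1 + η * M) hηM.le hquad u₂ u₁
  -- Part 2
  have part2 : ‖gradient (fun w => F (w, u₂')) u₁ - gradient (fun w => F (w, u₁')) u₁‖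
      ≤ M' * ‖u₂' - u₁'‖ := by
    have hdiff : Differentiable ℝ
        (fun w' : EuclideanSpace ℝ (Fin d) => gradient (fun w => F (w, w')) u₁) := by
      have h := (pd_grad_smooth hF).comp
        ((contDiff_const (c := u₁)).prodMk (contDiff_id (E := EuclideanSpace ℝ (Fin d))))
      exact h.differentiable (by simp)
    have := convex_univ.norm_image_sub_le_of_norm_fderiv_le
      (f := fun w' : EuclideanSpace ℝ (Fin d) => gradient (fun w => F (w, w')) u₁)
      (fun w' _ => hdiff w')
      (fun w' _ => hCross u₁ w')
      (Set.mem_univ u₁') (Set.mem_univ u₂')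
    simpa using this
  -- assemble
  have heq : (u₂ + η • gradient (fun w => F (w, u₂')) u₂) -
      (u₁ + η • gradient (fun w => F (w, u₁')) u₁) =
      ((u₂ + η • gradient (fun w => F (w, u₂')) u₂) -
        (u₁ + η • gradient (fun w => F (w, u₂')) u₁)) +
      (η • (gradient (fun w => F (w, u₂')) u₁ - gradient (fun w => F (w, u₁')) u₁)) := by
    module
  rw [heq]
  have tri := norm_add_le
    ((u₂ + η • gradient (fun w => F (w, u₂')) u₂) -
      (u₁ + η • gradient (fun w => F (w, u₂')) u₁))
    (η • (gradient (fun w => F (w, u₂')) u₁ - gradient (fun w => F (w, u₁')) u₁))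
  have hsm : ‖η • (gradient (fun w => F (w, u₂')) u₁ - gradient (fun w => F (w, u₁')) u₁)‖
      = η * ‖gradient (fun w => F (w, u₂')) u₁ - gradient (fun w => F (w, u₁')) u₁‖ := by
    rw [norm_smul, Real.norm_eq_abs, abs_of_pos hη0]
  have step1 : (1 + η * M) * ‖u₂ - u₁‖ ≤ (1 + η * M) * ‖u₂' - u₁'‖ :=
    mul_le_mul_of_nonneg_left hle hηM.le
  have step2 : η * ‖gradient (fun w => F (w, u₂')) u₁ - gradient (fun w => F (w, u₁')) u₁‖
      ≤ η * (M' * ‖u₂' - u₁'‖) := mul_le_mul_of_nonneg_left part2 hη0.le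
  have final : (1 + η * M) * ‖u₂' - u₁'‖ + η * (M' * ‖u₂' - u₁'‖)
      = (1 + η * M + η * M') * ‖u₂' - u₁'‖ := by ring
  linarith [tri, hsm ▸ tri, p1, step1, step2, final.le, final.ge]
end

section
/- Let E = ℝ^d with the Euclidean norm, let F : E × E → ℝ be smooth and satisfy conditions (i) and (ii) with constants L ≤ M < 0 and 0 ≤ M' < −M. Then for every η with 0 < η < −1/(2L), the update map u ↦ PD_F(u; u, η) = u + η·∇₁F(u,u) is a β-contraction with β := 1 + η·M + η·M' ∈ (0,1): for all u₁, u₂ ∈ E, ‖PD_F(u₂; u₂, η) − PD_F(u₁; u₁, η)‖ ≤ β·‖u₂ − u₁‖. -/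
open InnerProductSpace RealInnerProductSpace

section Aux

variable {E : Type*} [NormedAddCommGroup E] [InnerProductSpace ℝ E]

/-- A self-adjoint nonnegative operator whose quadratic form is bounded by `b‖v‖²`
has operator norm at most `b`. -/
theorem aux_selfadj_norm_le (A : E →L[ℝ] E) (b : ℝ) (hb : 0 ≤ b)
    (hsymm : ∀ v w : E, ⟪A v, w⟫ = ⟪A w, v⟫)
    (h0 : ∀ v : E, 0 ≤ ⟪A v, v⟫)
    (hub : ∀ v : E, ⟪A v, v⟫ ≤ b * ‖v‖ ^ 2) : ‖A‖ ≤ b := by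
  have key : ∀ v w : E, ⟪A v, w⟫ ≤ b / 2 * (‖v‖ ^ 2 + ‖w‖ ^ 2) := by
    intro v w
    have h1 : ⟪A (v + w), v + w⟫ = ⟪A v, v⟫ + 2 * ⟪A v, w⟫ + ⟪A w, w⟫ := by
      rw [map_add, inner_add_left, inner_add_right, inner_add_right, hsymm w v]; ring
    have h1' : ⟪A (v - w), v - w⟫ = ⟪A v, v⟫ - 2 * ⟪A v, w⟫ + ⟪A w, w⟫ := by
      rw [map_sub, inner_sub_left, inner_sub_right, inner_sub_right, hsymm w v]; ring
    have h3 := hub (v + w)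
    have h4 : ‖v + w‖ ^ 2 ≤ 2 * ‖v‖ ^ 2 + 2 * ‖w‖ ^ 2 := by
      have h5 := norm_add_sq_real v w
      have h6 := real_inner_le_norm v w
      nlinarith [norm_nonneg v, norm_nonneg w, sq_nonneg (‖v‖ - ‖w‖)]
    nlinarith [h0 (v - w), mul_le_mul_of_nonneg_left h4 hb]
  refine A.opNorm_le_bound hb ?_
  intro v
  by_cases hAv : A v = 0
  · rw [hAv, norm_zero]; positivity
  · have hv : v ≠ 0 := by rintro rfl; simp at hAv
    have hnv : 0 < ‖v‖ := norm_pos_iff.mpr hv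
    have hnAv : 0 < ‖A v‖ := norm_pos_iff.mpr hAv
    have hthis := key v ((‖v‖ / ‖A v‖) • A v)
    rw [real_inner_smul_right, real_inner_self_eq_norm_sq, norm_smul, Real.norm_eq_abs,
      abs_of_pos (div_pos hnv hnAv)] at hthis
    have e1 : ‖v‖ / ‖A v‖ * ‖A v‖ ^ 2 = ‖v‖ * ‖A v‖ := by field_simp
    have e2 : ‖v‖ / ‖A v‖ * ‖A v‖ = ‖v‖ := by field_simp
    rw [e1, e2] at hthis
    nlinarith

/-- The map `u ↦ u + η • ∇f(u)` is `(1 + ηM)`-Lipschitz when the Hessian of `f` lies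
between `L` and `M` and `1 + ηL, 1 + ηM ≥ 0`. -/
theorem aux_fixed_contraction [CompleteSpace E]
    (f : E → ℝ) (hf : ContDiff ℝ (⊤ : ℕ∞) f) (L M η : ℝ) (hη0 : 0 < η)
    (hL : 0 ≤ 1 + η * L) (hM : 0 ≤ 1 + η * M)
    (hlow : ∀ u v : E, L * ‖v‖ ^ 2 ≤ iteratedFDeriv ℝ 2 f u ![v, v])
    (hup : ∀ u v : E, iteratedFDeriv ℝ 2 f u ![v, v] ≤ M * ‖v‖ ^ 2)
    (u₁ u₂ : E) :
    ‖(u₂ + η • gradient f u₂) - (u₁ + η • gradient f u₁)‖ ≤ (1 + η * M) * ‖u₂ - u₁‖ := by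
  have hDf : ContDiff ℝ (⊤ : ℕ∞) (fderiv ℝ f) := hf.fderiv_right (by simp)
  set e : (E →L[ℝ] ℝ) →L[ℝ] E := (toDual ℝ E).symm.toLinearIsometry.toContinuousLinearMap with he
  set B : E → (E →L[ℝ] E →L[ℝ] ℝ) := fun u => fderiv ℝ (fderiv ℝ f) u with hB
  set A : E → (E →L[ℝ] E) := fun u => ContinuousLinearMap.id ℝ E + η • (e.comp (B u)) with hA
  have hBD : ∀ u : E, HasFDerivAt (fderiv ℝ f) (B u) u := fun u =>
    ((hDf.differentiable (by simp)) u).hasFDerivAt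
  have hD : ∀ u : E, HasFDerivAt (fun x => x + η • gradient f x) (A u) u := by
    intro u
    have h1 : HasFDerivAt (gradient f) (e.comp (B u)) u := e.hasFDerivAt.comp u (hBD u)
    exact (hasFDerivAt_id u).add (h1.const_smul η)
  have hAinner : ∀ u v w : E, ⟪e.comp (B u) v, w⟫ = B u v w := by
    intro u v w
    show ⟪(toDual ℝ E).symm (B u v), w⟫ = B u v w
    exact toDual_symm_apply
  have hBsymm : ∀ u v w : E, B u v w = B u w v := fun u =>
    second_derivative_symmetric (fun y => ((hf.differentiable (by simp)) y).hasFDerivAt) (hBD u)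
  have hBsq : ∀ u v : E, B u v v = iteratedFDeriv ℝ 2 f u ![v, v] := by
    intro u v
    rw [iteratedFDeriv_two_apply]
    simp [hB]
  have hAv : ∀ u v : E, A u v = v + η • (e.comp (B u) v) := by
    intro u v
    simp [hA]
  have hAnorm : ∀ u : E, ‖A u‖ ≤ 1 + η * M := by
    intro u
    apply aux_selfadj_norm_le (A u) (1 + η * M) hM
    · intro v w
      rw [hAv, hAv, inner_add_left, inner_add_left, real_inner_smul_left, real_inner_smul_left,
        hAinner, hAinner, hBsymm, real_inner_comm]
    · intro v
      rw [hAv, inner_add_left, real_inner_smul_left, hAinner, real_inner_self_eq_norm_sq, hBsq]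
      have h2 : η * (L * ‖v‖ ^ 2) ≤ η * iteratedFDeriv ℝ 2 f u ![v, v] :=
        mul_le_mul_of_nonneg_left (hlow u v) hη0.le
      nlinarith [sq_nonneg ‖v‖]
    · intro v
      rw [hAv, inner_add_left, real_inner_smul_left, hAinner, real_inner_self_eq_norm_sq, hBsq]
      have h2 : η * iteratedFDeriv ℝ 2 f u ![v, v] ≤ η * (M * ‖v‖ ^ 2) :=
        mul_le_mul_of_nonneg_left (hup u v) hη0.le
      linarith
  exact convex_univ.norm_image_sub_le_of_norm_hasFDerivWithin_le
    (fun x _ => (hD x).hasFDerivWithinAt) (fun x _ => hAnorm x)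
    (Set.mem_univ u₁) (Set.mem_univ u₂)

/-- General version of the contraction statement over an arbitrary real Hilbert space. -/
theorem aux_pd_update_contraction [CompleteSpace E]
    (F : E × E → ℝ) (hF : ContDiff ℝ (⊤ : ℕ∞) F)
    (L M M' : ℝ) (hLM : L ≤ M) (hM0 : M < 0) (hM'0 : 0 ≤ M') (hM' : M' < -M)
    (hHessLower : ∀ u u' v : E,
      L * ‖v‖ ^ 2 ≤ iteratedFDeriv ℝ 2 (fun w => F (w, u')) u ![v, v])
    (hHessUpper : ∀ u u' v : E,
      iteratedFDeriv ℝ 2 (fun w => F (w, u')) u ![v, v] ≤ M * ‖v‖ ^ 2)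
    (hCross : ∀ u u' : E,
      ‖fderiv ℝ (fun w' => gradient (fun w => F (w, w')) u) u'‖ ≤ M')
    (η : ℝ) (hη0 : 0 < η) (hη : η < -1 / (2 * L)) :
    (0 < 1 + η * M + η * M' ∧ 1 + η * M + η * M' < 1) ∧
    ∀ u₁ u₂ : E,
      ‖(u₂ + η • gradient (fun w => F (w, u₂)) u₂) -
          (u₁ + η • gradient (fun w => F (w, u₁)) u₁)‖ ≤
        (1 + η * M + η * M') * ‖u₂ - u₁‖ := by
  -- numerical facts
  have hL0 : L < 0 := lt_of_le_of_lt hLM hM0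
  have h2L : (0 : ℝ) < -(2 * L) := by linarith
  have hηL : -(1 / 2) < η * L := by
    have h1 : η * (-(2 * L)) < (-1 / (2 * L)) * (-(2 * L)) :=
      mul_lt_mul_of_pos_right hη h2L
    have h2 : (-1 / (2 * L)) * (-(2 * L)) = 1 := by
      field_simp
      exact div_self (by linarith)
    nlinarith
  have hηM : -(1 / 2) < η * M :=
    lt_of_lt_of_le hηL (mul_le_mul_of_nonneg_left hLM hη0.le)
  have hbL : (0 : ℝ) ≤ 1 + η * L := by linarith
  have hb : (0 : ℝ) ≤ 1 + η * M := by linarith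
  have hβ1 : 0 < 1 + η * M + η * M' := by nlinarith [mul_nonneg hη0.le hM'0]
  have hβ2 : 1 + η * M + η * M' < 1 := by
    nlinarith [mul_neg_of_pos_of_neg hη0 (show M + M' < 0 by linarith)]
  refine ⟨⟨hβ1, hβ2⟩, ?_⟩
  -- smoothness facts
  have hFd : ContDiff ℝ (⊤ : ℕ∞) (fderiv ℝ F) := hF.fderiv_right (by simp)
  have hpair : ∀ u' : E, ContDiff ℝ (⊤ : ℕ∞) (fun w : E => F (w, u')) := fun u' =>
    hF.comp (contDiff_id.prodMk contDiff_const)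
  have hpart : ∀ u u' : E, fderiv ℝ (fun w => F (w, u')) u =
      (fderiv ℝ F (u, u')).comp (ContinuousLinearMap.inl ℝ E E) := by
    intro u u'
    exact ((hF.differentiable (by simp) (u, u')).hasFDerivAt.comp u
      (hasFDerivAt_prodMk_left u u')).fderiv
  have hgrad : ∀ u u' : E, gradient (fun w => F (w, u')) u =
      (toDual ℝ E).symm ((fderiv ℝ F (u, u')).comp (ContinuousLinearMap.inl ℝ E E)) := by
    intro u u'
    show (toDual ℝ E).symm (fderiv ℝ (fun w => F (w, u')) u) = _
    rw [hpart]
  have hgsmooth : ContDiff ℝ (⊤ : ℕ∞) (fun p : E × E =>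
      (toDual ℝ E).symm ((fderiv ℝ F p).comp (ContinuousLinearMap.inl ℝ E E))) :=
    (toDual ℝ E).symm.contDiff.comp (hFd.clm_comp contDiff_const)
  -- Cross term bound
  have hcross2 : ∀ u₁ u₂ : E,
      ‖gradient (fun w => F (w, u₂)) u₁ - gradient (fun w => F (w, u₁)) u₁‖ ≤
        M' * ‖u₂ - u₁‖ := by
    intro u₁ u₂
    have hfun : (fun w' : E => gradient (fun w => F (w, w')) u₁) = fun w' =>
        (toDual ℝ E).symm ((fderiv ℝ F (u₁, w')).comp (ContinuousLinearMap.inl ℝ E E)) :=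
      funext fun w' => hgrad u₁ w'
    have hdiff : ∀ x ∈ (Set.univ : Set E),
        DifferentiableAt ℝ (fun w' : E => gradient (fun w => F (w, w')) u₁) x := by
      intro x _
      rw [hfun]
      exact ((hgsmooth.comp
        (contDiff_const.prodMk contDiff_id)).differentiable (by simp)).differentiableAt
    exact convex_univ.norm_image_sub_le_of_norm_fderiv_le hdiff
      (fun x _ => hCross u₁ x) (Set.mem_univ u₁) (Set.mem_univ u₂)
  -- Combine
  intro u₁ u₂
  have hcontr := aux_fixed_contraction (fun w => F (w, u₂)) (hpair u₂) L M η hη0 hbL hb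
    (fun u v => hHessLower u u₂ v) (fun u v => hHessUpper u u₂ v) u₁ u₂
  have hdecomp : (u₂ + η • gradient (fun w => F (w, u₂)) u₂) -
      (u₁ + η • gradient (fun w => F (w, u₁)) u₁) =
      ((u₂ + η • gradient (fun w => F (w, u₂)) u₂) -
        (u₁ + η • gradient (fun w => F (w, u₂)) u₁)) +
      η • (gradient (fun w => F (w, u₂)) u₁ - gradient (fun w => F (w, u₁)) u₁) := by
    rw [smul_sub]
    abel
  rw [hdecomp]
  calc ‖_ + _‖ ≤ ‖(u₂ + η • gradient (fun w => F (w, u₂)) u₂) -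
        (u₁ + η • gradient (fun w => F (w, u₂)) u₁)‖ +
        ‖η • (gradient (fun w => F (w, u₂)) u₁ - gradient (fun w => F (w, u₁)) u₁)‖ :=
      norm_add_le _ _
    _ ≤ (1 + η * M) * ‖u₂ - u₁‖ + η * (M' * ‖u₂ - u₁‖) := by
      have h3 : ‖η • (gradient (fun w => F (w, u₂)) u₁ - gradient (fun w => F (w, u₁)) u₁)‖ =
          η * ‖gradient (fun w => F (w, u₂)) u₁ - gradient (fun w => F (w, u₁)) u₁‖ := by
        rw [norm_smul, Real.norm_eq_abs, abs_of_pos hη0]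
      have h4 := mul_le_mul_of_nonneg_left (hcross2 u₁ u₂) hη0.le
      linarith
    _ = (1 + η * M + η * M') * ‖u₂ - u₁‖ := by ring

end Aux

/-- the update map `u ↦ PD_F(u; u, η) = u + η • ∇₁F(u,u)` is a
β-contraction with `β = 1 + η·M + η·M' ∈ (0,1)`. -/
theorem pd_update_contraction (d : ℕ)
    (F : (EuclideanSpace ℝ (Fin d)) × (EuclideanSpace ℝ (Fin d)) → ℝ)
    (hF : ContDiff ℝ (⊤ : ℕ∞) F)
    (L M M' : ℝ) (hLM : L ≤ M) (hM0 : M < 0) (hM'0 : 0 ≤ M') (hM' : M' < -M)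
    (hHessLower : ∀ u u' v : EuclideanSpace ℝ (Fin d),
      L * ‖v‖ ^ 2 ≤ iteratedFDeriv ℝ 2 (fun w => F (w, u')) u ![v, v])
    (hHessUpper : ∀ u u' v : EuclideanSpace ℝ (Fin d),
      iteratedFDeriv ℝ 2 (fun w => F (w, u')) u ![v, v] ≤ M * ‖v‖ ^ 2)
    (hCross : ∀ u u' : EuclideanSpace ℝ (Fin d),
      ‖fderiv ℝ (fun w' => gradient (fun w => F (w, w')) u) u'‖ ≤ M')
    (η : ℝ) (hη0 : 0 < η) (hη : η < -1 / (2 * L)) :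
    (0 < 1 + η * M + η * M' ∧ 1 + η * M + η * M' < 1) ∧
    ∀ u₁ u₂ : EuclideanSpace ℝ (Fin d),
      ‖(u₂ + η • gradient (fun w => F (w, u₂)) u₂) -
          (u₁ + η • gradient (fun w => F (w, u₁)) u₁)‖ ≤
        (1 + η * M + η * M') * ‖u₂ - u₁‖ :=
  aux_pd_update_contraction F hF L M M' hLM hM0 hM'0 hM' hHessLower hHessUpper hCross η hη0 hη
end

section
/- Let E = ℝ^d with the Euclidean norm, let F : E × E → ℝ be smooth and satisfy conditions (i) and (ii) with constants L ≤ M < 0 and 0 ≤ M' < −M, and let N_t ≥ 1 be an integer. For η with 0 < η < −1/(2L) and any behavior point u' ∈ E, write T_{u'}(w) := w + η·∇₁F(w,u'), and define G(u) := T_u^{N_t}(u) (N_t partial derivative steps with fixed behavior u). Then G is a β-contraction with β := 1 + η·M + η·M' ∈ (0,1): for all u₁, u₂ ∈ E, ‖G(u₂) − G(u₁)‖ ≤ β·‖u₂ − u₁‖. -/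
open InnerProductSpace

local notation "⟪" x ", " y "⟫" => @inner ℝ _ _ x y

/-- The canonical `ℝ`-linear isometry from a real inner product space to its dual. -/
noncomputable def toDualR (E : Type*) [NormedAddCommGroup E] [InnerProductSpace ℝ E]
    [CompleteSpace E] : E ≃ₗᵢ[ℝ] StrongDual ℝ E where
  toLinearEquiv :=
    { toFun := fun x => toDual ℝ E x
      map_add' := fun x y => by simp
      map_smul' := fun r x => by ext z; simp [real_inner_smul_left]
      invFun := fun φ => (toDual ℝ E).symm φ
      left_inv := fun x => by simp
      right_inv := fun φ => by simp }
  norm_map' := fun x => by simp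

variable {E : Type*} [NormedAddCommGroup E] [InnerProductSpace ℝ E]

lemma psd_cauchy_schwarz (A : E →L[ℝ] E)
    (hsymm : ∀ v w : E, ⟪A v, w⟫ = ⟪A w, v⟫)
    (hpos : ∀ v : E, 0 ≤ ⟪A v, v⟫) (v w : E) :
    ⟪A v, w⟫ ^ 2 ≤ ⟪A v, v⟫ * ⟪A w, w⟫ := by
  have key : ∀ t : ℝ, 0 ≤ ⟪A w, w⟫ * (t * t) + (2 * ⟪A v, w⟫) * t + ⟪A v, v⟫ := by
    intro t
    have h := hpos (v + t • w)
    have expand : ⟪A (v + t • w), v + t • w⟫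
        = ⟪A w, w⟫ * (t * t) + (2 * ⟪A v, w⟫) * t + ⟪A v, v⟫ := by
      simp only [map_add, map_smul, inner_add_left, inner_add_right,
        real_inner_smul_left, real_inner_smul_right]
      rw [hsymm w v]; ring
    linarith [expand ▸ h]
  have hd := discrim_le_zero key
  rw [discrim] at hd
  nlinarith

lemma psd_norm_sq_le (A : E →L[ℝ] E)
    (hsymm : ∀ v w : E, ⟪A v, w⟫ = ⟪A w, v⟫)
    (hpos : ∀ v : E, 0 ≤ ⟪A v, v⟫) (c : ℝ) (hc : 0 ≤ c)
    (hup : ∀ v : E, ⟪A v, v⟫ ≤ c * ‖v‖ ^ 2) (v : E) :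
    ‖A v‖ ^ 2 ≤ c * ⟪A v, v⟫ := by
  have h := psd_cauchy_schwarz A hsymm hpos v (A v)
  have h2 : ⟪A (A v), A v⟫ ≤ c * ‖A v‖ ^ 2 := hup (A v)
  have h3 : ⟪A v, A v⟫ = ‖A v‖ ^ 2 := real_inner_self_eq_norm_sq (A v)
  rcases eq_or_lt_of_le (norm_nonneg (A v)) with h0 | h0
  · rw [← h0]; simpa using mul_nonneg hc (hpos v)
  · have h4 : ⟪A v, v⟫ * ⟪A (A v), A v⟫ ≤ ⟪A v, v⟫ * (c * ‖A v‖ ^ 2) :=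
      mul_le_mul_of_nonneg_left h2 (hpos v)
    nlinarith [h, h4, h3, pow_pos h0 2, h0, hpos v]

lemma step_contraction (H : E →L[ℝ] E)
    (hsymm : ∀ v w : E, ⟪H v, w⟫ = ⟪H w, v⟫)
    (L M η : ℝ) (hLM : L ≤ M)
    (hlow : ∀ v : E, L * ‖v‖ ^ 2 ≤ ⟪H v, v⟫)
    (hup : ∀ v : E, ⟪H v, v⟫ ≤ M * ‖v‖ ^ 2)
    (hη : 0 ≤ η) (hβ : 0 ≤ 1 + η * M) (hcond : η * (M - L) ≤ 2 * (1 + η * M))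
    (v : E) : ‖v + η • H v‖ ≤ (1 + η * M) * ‖v‖ := by
  set A : E →L[ℝ] E := M • (ContinuousLinearMap.id ℝ E) - H with hA
  have hAapp : ∀ w, A w = M • w - H w := by intro w; simp [hA]
  have hAsymm : ∀ x y : E, ⟪A x, y⟫ = ⟪A y, x⟫ := by
    intro x y
    simp only [hAapp, inner_sub_left, real_inner_smul_left]
    rw [hsymm x y, real_inner_comm x y]
  have hApos : ∀ x : E, 0 ≤ ⟪A x, x⟫ := by
    intro x
    have := hup x
    simp only [hAapp, inner_sub_left, real_inner_smul_left, real_inner_self_eq_norm_sq]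
    linarith
  have hAup : ∀ x : E, ⟪A x, x⟫ ≤ (M - L) * ‖x‖ ^ 2 := by
    intro x
    have := hlow x
    simp only [hAapp, inner_sub_left, real_inner_smul_left, real_inner_self_eq_norm_sq]
    linarith
  have hB := psd_norm_sq_le A hAsymm hApos (M - L) (sub_nonneg.2 hLM) hAup v
  have hrw : v + η • H v = (1 + η * M) • v - η • A v := by
    rw [hAapp]; module
  have hexp : ‖v + η • H v‖ ^ 2
      = (1 + η * M) ^ 2 * ‖v‖ ^ 2 - 2 * ((1 + η * M) * η) * ⟪A v, v⟫ + η ^ 2 * ‖A v‖ ^ 2 := by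
    rw [hrw, @norm_sub_sq_real]
    rw [norm_smul, norm_smul, real_inner_smul_left, real_inner_smul_right, real_inner_comm]
    simp [abs_of_nonneg hβ, mul_pow]
    ring
  have h2 : ‖v + η • H v‖ ^ 2 ≤ ((1 + η * M) * ‖v‖) ^ 2 := by
    rw [hexp]
    have h3 : η ^ 2 * ‖A v‖ ^ 2 ≤ η ^ 2 * ((M - L) * ⟪A v, v⟫) :=
      mul_le_mul_of_nonneg_left hB (sq_nonneg η)
    nlinarith [hApos v, mul_nonneg hη (hApos v)]
  nlinarith [norm_nonneg (v + η • H v), mul_nonneg hβ (norm_nonneg v)]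

section GradAux

set_option linter.unusedSectionVars false

variable [CompleteSpace E] (F : E × E → ℝ) (hF : ContDiff ℝ (⊤ : ℕ∞) F)

include hF

lemma aux_partial_smooth (u' : E) : ContDiff ℝ (⊤ : ℕ∞) (fun z : E => F (z, u')) :=
  hF.comp (contDiff_id.prodMk contDiff_const)

lemma aux_fderiv_partial (u' w : E) : fderiv ℝ (fun z => F (z, u')) w
    = (fderiv ℝ F (w, u')).comp (ContinuousLinearMap.inl ℝ E E) := by
  have h := (((hF.differentiable (by simp)) (w, u')).hasFDerivAt.comp w
    (hasFDerivAt_prodMk_left (𝕜 := ℝ) w u')).fderiv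
  simpa [Function.comp_def] using h

lemma aux_grad_smooth : ContDiff ℝ (⊤ : ℕ∞) (fun p : E × E => gradient (fun z => F (z, p.2)) p.1) := by
  have hcont : ContDiff ℝ (⊤ : ℕ∞) (fun p : E × E => fderiv ℝ F p) := hF.fderiv_right (by simp)
  have heq : (fun p : E × E => gradient (fun z => F (z, p.2)) p.1)
      = fun p : E × E => (toDualR E).symm
          (((ContinuousLinearMap.compL ℝ E (E × E) ℝ).flip
            (ContinuousLinearMap.inl ℝ E E)) (fderiv ℝ F p)) := by
    funext p
    show (toDual ℝ E).symm _ = _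
    rw [aux_fderiv_partial F hF]
    rfl
  rw [heq]
  exact (toDualR E).symm.contDiff.comp
    ((((ContinuousLinearMap.compL ℝ E (E × E) ℝ).flip
      (ContinuousLinearMap.inl ℝ E E)).contDiff).comp hcont)

lemma aux_hinner (u' u v w : E) :
    iteratedFDeriv ℝ 2 (fun z => F (z, u')) u ![v, w]
      = ⟪fderiv ℝ (fun x => gradient (fun z => F (z, u')) x) u v, w⟫ := by
  have hf2 : ContDiff ℝ (⊤ : ℕ∞) (fun z : E => F (z, u')) := aux_partial_smooth F hF u'
  rw [iteratedFDeriv_two_apply]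
  have hg : (fun x => gradient (fun z => F (z, u')) x)
      = ⇑(toDualR E).symm ∘ (fderiv ℝ (fun z => F (z, u'))) := rfl
  have hK : fderiv ℝ (fun x => gradient (fun z => F (z, u')) x) u
      = ((toDualR E).symm : StrongDual ℝ E →L[ℝ] E).comp
          (fderiv ℝ (fderiv ℝ (fun z => F (z, u'))) u) := by
    rw [hg]
    exact (toDualR E).symm.comp_fderiv
  rw [hK]
  simp only [ContinuousLinearMap.coe_comp', Function.comp_apply,
    Matrix.cons_val_zero, Matrix.cons_val_one, Matrix.head_cons]
  rw [show ((toDualR E).symm : StrongDual ℝ E →L[ℝ] E)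
      (fderiv ℝ (fderiv ℝ (fun z => F (z, u'))) u v)
      = (toDual ℝ E).symm (fderiv ℝ (fderiv ℝ (fun z => F (z, u'))) u v) from rfl]
  rw [toDual_symm_apply]

end GradAux

/-- the map `G(u) = T_u^{N_t}(u)`, where
`T_{u'}(w) = w + η • ∇₁F(w, u')`, is a β-contraction with
`β = 1 + η·M + η·M' ∈ (0,1)`. -/
theorem pd_multi_step_contraction (d : ℕ)
    (F : (EuclideanSpace ℝ (Fin d)) × (EuclideanSpace ℝ (Fin d)) → ℝ)
    (hF : ContDiff ℝ (⊤ : ℕ∞) F)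
    (L M M' : ℝ) (hLM : L ≤ M) (hM0 : M < 0) (hM'0 : 0 ≤ M') (hM' : M' < -M)
    (hHessLower : ∀ u u' v : EuclideanSpace ℝ (Fin d),
      L * ‖v‖ ^ 2 ≤ iteratedFDeriv ℝ 2 (fun w => F (w, u')) u ![v, v])
    (hHessUpper : ∀ u u' v : EuclideanSpace ℝ (Fin d),
      iteratedFDeriv ℝ 2 (fun w => F (w, u')) u ![v, v] ≤ M * ‖v‖ ^ 2)
    (hCross : ∀ u u' : EuclideanSpace ℝ (Fin d),
      ‖fderiv ℝ (fun w' => gradient (fun w => F (w, w')) u) u'‖ ≤ M')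
    (Nt : ℕ) (hNt : 1 ≤ Nt)
    (η : ℝ) (hη0 : 0 < η) (hη : η < -1 / (2 * L)) :
    (0 < 1 + η * M + η * M' ∧ 1 + η * M + η * M' < 1) ∧
    ∀ u₁ u₂ : EuclideanSpace ℝ (Fin d),
      ‖(fun w => w + η • gradient (fun z => F (z, u₂)) w)^[Nt] u₂ -
          (fun w => w + η • gradient (fun z => F (z, u₁)) w)^[Nt] u₁‖ ≤
        (1 + η * M + η * M') * ‖u₂ - u₁‖ := by
  -- arithmetic preliminaries
  have hLneg : L < 0 := lt_of_le_of_lt hLM hM0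
  have h2L : 2 * L < 0 := by linarith
  have hηL : -1 < 2 * (η * L) := by
    have h1 := mul_lt_mul_of_neg_right hη h2L
    have key : -1 / (2 * L) * (2 * L) = -1 := div_mul_cancel₀ (-1 : ℝ) (ne_of_lt h2L)
    rw [key] at h1
    nlinarith [h1]
  have hηLM : η * L ≤ η * M := mul_le_mul_of_nonneg_left hLM hη0.le
  have hβ1 : 0 < 1 + η * M := by linarith
  have hβ1lt : 1 + η * M < 1 := by nlinarith
  have hηM' : 0 ≤ η * M' := mul_nonneg hη0.le hM'0
  have hβpos : 0 < 1 + η * M + η * M' := by linarith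
  have hβlt : 1 + η * M + η * M' < 1 := by nlinarith [mul_lt_mul_of_pos_left hM' hη0]
  have hcond : η * (M - L) ≤ 2 * (1 + η * M) := by nlinarith
  refine ⟨⟨hβpos, hβlt⟩, ?_⟩
  have hgsmooth := aux_grad_smooth F hF
  have hg1 : ∀ u' : EuclideanSpace ℝ (Fin d),
      ContDiff ℝ (⊤ : ℕ∞) (fun w => gradient (fun z => F (z, u')) w) :=
    fun u' => hgsmooth.comp (contDiff_id.prodMk contDiff_const)
  have hg2 : ∀ u : EuclideanSpace ℝ (Fin d),
      ContDiff ℝ (⊤ : ℕ∞) (fun w' => gradient (fun z => F (z, w')) u) :=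
    fun u => hgsmooth.comp (contDiff_const.prodMk contDiff_id)
  have hinner := aux_hinner F hF
  have hsymmH : ∀ (u' u v w : EuclideanSpace ℝ (Fin d)),
      ⟪fderiv ℝ (fun x => gradient (fun z => F (z, u')) x) u v, w⟫
        = ⟪fderiv ℝ (fun x => gradient (fun z => F (z, u')) x) u w, v⟫ := by
    intro u' u v w
    have hf2 : ContDiff ℝ (⊤ : ℕ∞) (fun z : EuclideanSpace ℝ (Fin d) => F (z, u')) :=
      aux_partial_smooth F hF u'
    have hs := hf2.contDiffAt.isSymmSndFDerivAt ((by rw [minSmoothness_of_isRCLikeNormedField]; exact WithTop.coe_le_coe.mpr (le_top : (2 : ℕ∞) ≤ ⊤))) (x := u)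
    have e1 := hinner u' u v w
    have e2 := hinner u' u w v
    rw [iteratedFDeriv_two_apply] at e1 e2
    simp only [Matrix.cons_val_zero, Matrix.cons_val_one, Matrix.head_cons] at e1 e2
    rw [← e1, ← e2]
    exact hs v w
  have hHlow : ∀ (u' u v : EuclideanSpace ℝ (Fin d)),
      L * ‖v‖ ^ 2 ≤ ⟪fderiv ℝ (fun x => gradient (fun z => F (z, u')) x) u v, v⟫ := by
    intro u' u v
    have := hHessLower u u' v
    rwa [hinner u' u v v] at this
  have hHup : ∀ (u' u v : EuclideanSpace ℝ (Fin d)),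
      ⟪fderiv ℝ (fun x => gradient (fun z => F (z, u')) x) u v, v⟫ ≤ M * ‖v‖ ^ 2 := by
    intro u' u v
    have := hHessUpper u u' v
    rwa [hinner u' u v v] at this
  -- one-step contraction in w
  have hTlip : ∀ (u' x y : EuclideanSpace ℝ (Fin d)),
      ‖(x + η • gradient (fun z => F (z, u')) x) - (y + η • gradient (fun z => F (z, u')) y)‖
        ≤ (1 + η * M) * ‖x - y‖ := by
    intro u' x y
    have hdiff : ∀ z : EuclideanSpace ℝ (Fin d), DifferentiableAt ℝ
        (fun w => w + η • gradient (fun z' => F (z', u')) w) z := by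
      intro z
      exact (differentiableAt_id.add (((hg1 u').differentiable (by simp) z).const_smul η))
    have hbound : ∀ z : EuclideanSpace ℝ (Fin d),
        ‖fderiv ℝ (fun w => w + η • gradient (fun z' => F (z', u')) w) z‖ ≤ 1 + η * M := by
      intro z
      have hgz : HasFDerivAt (fun w => gradient (fun z' => F (z', u')) w)
          (fderiv ℝ (fun w => gradient (fun z' => F (z', u')) w) z) z :=
        ((hg1 u').differentiable (by simp) z).hasFDerivAt
      have hd : HasFDerivAt (fun w => w + η • gradient (fun z' => F (z', u')) w)
          (ContinuousLinearMap.id ℝ (EuclideanSpace ℝ (Fin d))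
            + η • fderiv ℝ (fun w => gradient (fun z' => F (z', u')) w) z) z :=
        (hasFDerivAt_id z).add (hgz.const_smul η)
      rw [hd.fderiv]
      apply ContinuousLinearMap.opNorm_le_bound _ hβ1.le
      intro v
      have happ : (ContinuousLinearMap.id ℝ (EuclideanSpace ℝ (Fin d))
          + η • fderiv ℝ (fun w => gradient (fun z' => F (z', u')) w) z) v
          = v + η • (fderiv ℝ (fun w => gradient (fun z' => F (z', u')) w) z) v := by
        simp
      rw [happ]
      exact step_contraction _ (hsymmH u' z) L M η hLM (hHlow u' z) (hHup u' z)
        hη0.le hβ1.le hcond v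
    have := Convex.norm_image_sub_le_of_norm_fderiv_le
      (fun z _ => hdiff z) (fun z _ => hbound z) convex_univ
      (Set.mem_univ y) (Set.mem_univ x)
    simpa using this
  -- cross Lipschitz bound
  have hcross : ∀ (u a b : EuclideanSpace ℝ (Fin d)),
      ‖gradient (fun z => F (z, b)) u - gradient (fun z => F (z, a)) u‖ ≤ M' * ‖b - a‖ := by
    intro u a b
    have hdiff : ∀ z : EuclideanSpace ℝ (Fin d), DifferentiableAt ℝ
        (fun w' => gradient (fun w => F (w, w')) u) z :=
      fun z => (hg2 u).differentiable (by simp) z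
    have := Convex.norm_image_sub_le_of_norm_fderiv_le
      (fun z _ => hdiff z) (fun z _ => hCross u z) convex_univ
      (Set.mem_univ a) (Set.mem_univ b)
    simpa using this
  -- the iteration
  intro u₁ u₂
  set T₁ : EuclideanSpace ℝ (Fin d) → EuclideanSpace ℝ (Fin d) :=
    fun w => w + η • gradient (fun z => F (z, u₁)) w with hT₁
  set T₂ : EuclideanSpace ℝ (Fin d) → EuclideanSpace ℝ (Fin d) :=
    fun w => w + η • gradient (fun z => F (z, u₂)) w with hT₂
  set D := ‖u₂ - u₁‖ with hD
  have hD0 : 0 ≤ D := norm_nonneg _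
  have hstep : ∀ x y : EuclideanSpace ℝ (Fin d),
      ‖T₂ x - T₁ y‖ ≤ (1 + η * M) * ‖x - y‖ + η * M' * D := by
    intro x y
    have tri : ‖T₂ x - T₁ y‖ ≤ ‖T₂ x - T₂ y‖ + ‖T₂ y - T₁ y‖ :=
      norm_sub_le_norm_sub_add_norm_sub (T₂ x) (T₂ y) (T₁ y)
    have h1 : ‖T₂ x - T₂ y‖ ≤ (1 + η * M) * ‖x - y‖ := hTlip u₂ x y
    have h2 : ‖T₂ y - T₁ y‖ ≤ η * M' * D := by
      have heq : T₂ y - T₁ y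
          = η • (gradient (fun z => F (z, u₂)) y - gradient (fun z => F (z, u₁)) y) := by
        rw [hT₁, hT₂]
        simp only [smul_sub]
        abel
      rw [heq, norm_smul, Real.norm_eq_abs, abs_of_pos hη0]
      have hcr := hcross y u₁ u₂
      calc η * ‖gradient (fun z => F (z, u₂)) y - gradient (fun z => F (z, u₁)) y‖
          ≤ η * (M' * D) := mul_le_mul_of_nonneg_left hcr hη0.le
        _ = η * M' * D := by ring
    linarith
  have key : ∀ n : ℕ, 1 ≤ n → ‖T₂^[n] u₂ - T₁^[n] u₁‖ ≤ (1 + η * M + η * M') * D := by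
    intro n hn
    induction n, hn using Nat.le_induction with
    | base =>
      simp only [Function.iterate_one]
      calc ‖T₂ u₂ - T₁ u₁‖ ≤ (1 + η * M) * ‖u₂ - u₁‖ + η * M' * D := hstep u₂ u₁
        _ = (1 + η * M + η * M') * D := by rw [← hD]; ring
    | succ n hn ih =>
      rw [Function.iterate_succ_apply', Function.iterate_succ_apply']
      have h1 := hstep (T₂^[n] u₂) (T₁^[n] u₁)
      have h2 : (1 + η * M) * ‖T₂^[n] u₂ - T₁^[n] u₁‖
          ≤ (1 + η * M) * ((1 + η * M + η * M') * D) :=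
        mul_le_mul_of_nonneg_left ih hβ1.le
      have hMM' : η * M + η * M' < 0 := by
        have := mul_lt_mul_of_pos_left hM' hη0
        nlinarith [this]
      have h4 : (1 + η * M) * (η * M + η * M') ≤ 0 :=
        mul_nonpos_of_nonneg_of_nonpos hβ1.le hMM'.le
      have h5 : ((1 + η * M) * (η * M + η * M')) * D ≤ 0 :=
        mul_nonpos_of_nonpos_of_nonneg h4 hD0
      have h3 : (1 + η * M) * ((1 + η * M + η * M') * D) + η * M' * D
          ≤ (1 + η * M + η * M') * D := by nlinarith [h5]
      linarith
  exact key Nt hNt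
end

section
/- Let E = ℝ^d with the Euclidean norm, let F : E × E → ℝ be smooth and satisfy conditions (i) and (ii) with constants L ≤ M < 0 and 0 ≤ M' < −M, and suppose there exists u* ∈ E with F(u, u*) ≤ F(u*, u*) for all u ∈ E (u* maximizes F(·, u*)). Then for every η with 0 < η < −1/(2L), the sequence defined by u_{k+1} = u_k + η·∇₁F(u_k, u_k) from any initial point u₀ satisfies ‖u_k − u*‖ ≤ β^k·‖u₀ − u*‖ with β := 1 + η·M + η·M' ∈ (0,1); in particular u_k converges to u*. -/
open RealInnerProductSpace InnerProductSpace

lemma psd_op_norm_bound {E : Type*} [NormedAddCommGroup E] [InnerProductSpace ℝ E]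
    (B : E →L[ℝ] E) (hsymm : ∀ x y : E, ⟪B x, y⟫ = ⟪x, B y⟫)
    (c : ℝ) (hc0 : 0 ≤ c)
    (h0 : ∀ v : E, 0 ≤ ⟪B v, v⟫) (hc : ∀ v : E, ⟪B v, v⟫ ≤ c * ‖v‖ ^ 2)
    (v : E) : ‖B v‖ ≤ c * ‖v‖ := by
  have CS : ∀ x y : E, ⟪B x, y⟫ ^ 2 ≤ ⟪B x, x⟫ * ⟪B y, y⟫ := by
    intro x y
    have key : ∀ t : ℝ, 0 ≤ ⟪B y, y⟫ * (t * t) + (2 * ⟪B x, y⟫) * t + ⟪B x, x⟫ := by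
      intro t
      have h := h0 (x + t • y)
      have expand : ⟪B (x + t • y), x + t • y⟫ =
          ⟪B y, y⟫ * (t * t) + (2 * ⟪B x, y⟫) * t + ⟪B x, x⟫ := by
        have hyx : ⟪B y, x⟫ = ⟪B x, y⟫ := by
          rw [hsymm y x, real_inner_comm]
        simp only [map_add, map_smul, inner_add_left, inner_add_right,
          inner_smul_left, inner_smul_right, RCLike.conj_to_real, hyx]
        ring
      linarith [expand ▸ h]
    have hd := discrim_le_zero key
    rw [discrim] at hd
    nlinarith [hd]
  have h1 := CS v (B v)
  have h2 : ⟪B v, B v⟫ = ‖B v‖ ^ 2 := real_inner_self_eq_norm_sq (B v)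
  have h3 : ⟪B v, v⟫ ≤ c * ‖v‖ ^ 2 := hc v
  have h4 : ⟪B (B v), B v⟫ ≤ c * ‖B v‖ ^ 2 := hc (B v)
  have h5 : 0 ≤ ⟪B v, v⟫ := h0 v
  have h6 : 0 ≤ ⟪B (B v), B v⟫ := h0 (B v)
  by_contra hcon
  push_neg at hcon
  have hBv : 0 < ‖B v‖ := lt_of_le_of_lt (by positivity) hcon
  have h7 : ‖B v‖ ^ 2 * ‖B v‖ ^ 2 ≤ (c * ‖v‖ ^ 2) * (c * ‖B v‖ ^ 2) := by
    calc ‖B v‖ ^ 2 * ‖B v‖ ^ 2 = ⟪B v, B v⟫ ^ 2 := by rw [h2]; ring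
      _ ≤ ⟪B v, v⟫ * ⟪B (B v), B v⟫ := h1
      _ ≤ (c * ‖v‖ ^ 2) * (c * ‖B v‖ ^ 2) := mul_le_mul h3 h4 h6 (h5.trans h3)
  have h8 : ‖B v‖ ^ 2 ≤ c ^ 2 * ‖v‖ ^ 2 := by
    have hBv2 : 0 < ‖B v‖ ^ 2 := by positivity
    rw [← mul_le_mul_iff_of_pos_right hBv2]
    calc ‖B v‖ ^ 2 * ‖B v‖ ^ 2 ≤ (c * ‖v‖ ^ 2) * (c * ‖B v‖ ^ 2) := h7
      _ = c ^ 2 * ‖v‖ ^ 2 * ‖B v‖ ^ 2 := by ring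
  nlinarith [mul_self_lt_mul_self (by positivity : (0:ℝ) ≤ c * ‖v‖) hcon, h8]

/-- convergence of the iteration `u_{k+1} = u_k + η • ∇₁F(u_k, u_k)`
to the point `u*` maximizing `F(·, u*)`, at geometric rate
`β = 1 + η·M + η·M' ∈ (0,1)`. -/
theorem pd_iteration_converges (d : ℕ)
    (F : (EuclideanSpace ℝ (Fin d)) × (EuclideanSpace ℝ (Fin d)) → ℝ)
    (hF : ContDiff ℝ (⊤ : ℕ∞) F)
    (L M M' : ℝ) (hLM : L ≤ M) (hM0 : M < 0) (hM'0 : 0 ≤ M') (hM' : M' < -M)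
    (hHessLower : ∀ u u' v : EuclideanSpace ℝ (Fin d),
      L * ‖v‖ ^ 2 ≤ iteratedFDeriv ℝ 2 (fun w => F (w, u')) u ![v, v])
    (hHessUpper : ∀ u u' v : EuclideanSpace ℝ (Fin d),
      iteratedFDeriv ℝ 2 (fun w => F (w, u')) u ![v, v] ≤ M * ‖v‖ ^ 2)
    (hCross : ∀ u u' : EuclideanSpace ℝ (Fin d),
      ‖fderiv ℝ (fun w' => gradient (fun w => F (w, w')) u) u'‖ ≤ M')
    (ustar : EuclideanSpace ℝ (Fin d))
    (hstar : ∀ u : EuclideanSpace ℝ (Fin d), F (u, ustar) ≤ F (ustar, ustar))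
    (η : ℝ) (hη0 : 0 < η) (hη : η < -1 / (2 * L))
    (u : ℕ → EuclideanSpace ℝ (Fin d))
    (hu : ∀ k : ℕ, u (k + 1) = u k + η • gradient (fun w => F (w, u k)) (u k)) :
    (0 < 1 + η * M + η * M' ∧ 1 + η * M + η * M' < 1) ∧
    (∀ k : ℕ, ‖u k - ustar‖ ≤ (1 + η * M + η * M') ^ k * ‖u 0 - ustar‖) ∧
    Filter.Tendsto u Filter.atTop (nhds ustar) := by
  -- numeric facts
  have hL0 : L < 0 := lt_of_le_of_lt hLM hM0
  have h2L : 2 * L < 0 := by linarith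
  have hηL : -1 < η * (2 * L) := (lt_div_iff_of_neg h2L).mp hη
  have hβpos : 0 < 1 + η * M + η * M' := by
    have h1 : η * L ≤ η * M := mul_le_mul_of_nonneg_left hLM hη0.le
    have h2 : 0 ≤ η * M' := mul_nonneg hη0.le hM'0
    nlinarith
  have hβlt : 1 + η * M + η * M' < 1 := by nlinarith
  have h1ηL : 0 ≤ 1 + η * L := by nlinarith
  have h1ηM : 0 ≤ 1 + η * M := by
    have h1 : η * L ≤ η * M := mul_le_mul_of_nonneg_left hLM hη0.le
    linarith
  -- smoothness of slices
  have hg : ∀ y : (EuclideanSpace ℝ (Fin d)), ContDiff ℝ (⊤ : ℕ∞) (fun w : (EuclideanSpace ℝ (Fin d)) => F (w, y)) := by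
    intro y
    have : (fun w : (EuclideanSpace ℝ (Fin d)) => F (w, y)) = F ∘ (fun w : (EuclideanSpace ℝ (Fin d)) => (w, y)) := rfl
    rw [this]
    exact hF.comp (contDiff_id.prodMk contDiff_const)
  have hgradfun : ∀ y : (EuclideanSpace ℝ (Fin d)), (fun x : (EuclideanSpace ℝ (Fin d)) => gradient (fun w : (EuclideanSpace ℝ (Fin d)) => F (w, y)) x) =
      (⇑(toDual ℝ (EuclideanSpace ℝ (Fin d))).symm ∘ (fderiv ℝ (fun w : (EuclideanSpace ℝ (Fin d)) => F (w, y)))) := fun y => rfl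
  have hΦ : ∀ y : (EuclideanSpace ℝ (Fin d)), ContDiff ℝ (⊤ : ℕ∞) (fun x : (EuclideanSpace ℝ (Fin d)) => gradient (fun w : (EuclideanSpace ℝ (Fin d)) => F (w, y)) x) := by
    intro y
    rw [hgradfun y]
    exact (toDual ℝ (EuclideanSpace ℝ (Fin d))).symm.contDiff.comp ((hg y).fderiv_right (by simp))
  -- inner products with the derivative of the gradient
  have hinner : ∀ (y x v w : (EuclideanSpace ℝ (Fin d))),
      ⟪fderiv ℝ (fun x : (EuclideanSpace ℝ (Fin d)) => gradient (fun w : (EuclideanSpace ℝ (Fin d)) => F (w, y)) x) x v, w⟫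
        = fderiv ℝ (fderiv ℝ (fun w : (EuclideanSpace ℝ (Fin d)) => F (w, y))) x v w := by
    intro y x v w
    have h := (toDual ℝ (EuclideanSpace ℝ (Fin d))).symm.comp_fderiv
      (f := fderiv ℝ (fun w : (EuclideanSpace ℝ (Fin d)) => F (w, y))) (x := x)
    rw [← hgradfun y] at h
    rw [h]
    exact toDual_symm_apply
  have hsymm2 : ∀ (y x v w : (EuclideanSpace ℝ (Fin d))),
      fderiv ℝ (fderiv ℝ (fun w : (EuclideanSpace ℝ (Fin d)) => F (w, y))) x v w
        = fderiv ℝ (fderiv ℝ (fun w : (EuclideanSpace ℝ (Fin d)) => F (w, y))) x w v := by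
    intro y x v w
    exact second_derivative_symmetric
      (fun z => (((hg y).differentiable (by simp)) z).hasFDerivAt)
      (((((hg y).fderiv_right (m := (⊤ : ℕ∞)) (by simp)).differentiable (by simp)) x).hasFDerivAt) v w
  have hquad : ∀ (y x v : (EuclideanSpace ℝ (Fin d))),
      fderiv ℝ (fderiv ℝ (fun w : (EuclideanSpace ℝ (Fin d)) => F (w, y))) x v v
        = iteratedFDeriv ℝ 2 (fun w : (EuclideanSpace ℝ (Fin d)) => F (w, y)) x ![v, v] := by
    intro y x v
    rw [iteratedFDeriv_two_apply]
    simp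
  -- step 1: contraction of x ↦ x + η • ∇₁F(x, y) for fixed y
  have hstep : ∀ y a b : (EuclideanSpace ℝ (Fin d)),
      ‖(a + η • gradient (fun w : (EuclideanSpace ℝ (Fin d)) => F (w, y)) a)
        - (b + η • gradient (fun w : (EuclideanSpace ℝ (Fin d)) => F (w, y)) b)‖ ≤ (1 + η * M) * ‖a - b‖ := by
    intro y a b
    have hdiff : ∀ x : (EuclideanSpace ℝ (Fin d)), DifferentiableAt ℝ
        (fun x : (EuclideanSpace ℝ (Fin d)) => x + η • gradient (fun w : (EuclideanSpace ℝ (Fin d)) => F (w, y)) x) x := fun x =>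
      differentiableAt_id.add (((hΦ y).differentiable (by simp) x).const_smul η)
    have hfd : ∀ x : (EuclideanSpace ℝ (Fin d)), fderiv ℝ (fun x : (EuclideanSpace ℝ (Fin d)) => x + η • gradient (fun w : (EuclideanSpace ℝ (Fin d)) => F (w, y)) x) x
        = ContinuousLinearMap.id ℝ (EuclideanSpace ℝ (Fin d))
          + η • fderiv ℝ (fun x : (EuclideanSpace ℝ (Fin d)) => gradient (fun w : (EuclideanSpace ℝ (Fin d)) => F (w, y)) x) x := by
      intro x
      have h1 : HasFDerivAt (fun x : (EuclideanSpace ℝ (Fin d)) => x + η • gradient (fun w : (EuclideanSpace ℝ (Fin d)) => F (w, y)) x)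
          (ContinuousLinearMap.id ℝ (EuclideanSpace ℝ (Fin d))
            + η • fderiv ℝ (fun x : (EuclideanSpace ℝ (Fin d)) => gradient (fun w : (EuclideanSpace ℝ (Fin d)) => F (w, y)) x) x) x :=
        (hasFDerivAt_id x).add
          ((((hΦ y).differentiable (by simp) x).hasFDerivAt).const_smul η)
      exact h1.fderiv
    have hbound : ∀ x : (EuclideanSpace ℝ (Fin d)),
        ‖fderiv ℝ (fun x : (EuclideanSpace ℝ (Fin d)) => x + η • gradient (fun w : (EuclideanSpace ℝ (Fin d)) => F (w, y)) x) x‖ ≤ 1 + η * M := by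
      intro x
      rw [hfd x]
      apply ContinuousLinearMap.opNorm_le_bound _ h1ηM
      intro v
      have hAvv_l : ∀ p : (EuclideanSpace ℝ (Fin d)), L * ‖p‖ ^ 2 ≤
          ⟪fderiv ℝ (fun x : (EuclideanSpace ℝ (Fin d)) => gradient (fun w : (EuclideanSpace ℝ (Fin d)) => F (w, y)) x) x p, p⟫ := by
        intro p; rw [hinner, hquad]; exact hHessLower x y p
      have hAvv_u : ∀ p : (EuclideanSpace ℝ (Fin d)),
          ⟪fderiv ℝ (fun x : (EuclideanSpace ℝ (Fin d)) => gradient (fun w : (EuclideanSpace ℝ (Fin d)) => F (w, y)) x) x p, p⟫ ≤ M * ‖p‖ ^ 2 := by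
        intro p; rw [hinner, hquad]; exact hHessUpper x y p
      have hAsymm : ∀ p q : (EuclideanSpace ℝ (Fin d)),
          ⟪fderiv ℝ (fun x : (EuclideanSpace ℝ (Fin d)) => gradient (fun w : (EuclideanSpace ℝ (Fin d)) => F (w, y)) x) x p, q⟫
            = ⟪p, fderiv ℝ (fun x : (EuclideanSpace ℝ (Fin d)) => gradient (fun w : (EuclideanSpace ℝ (Fin d)) => F (w, y)) x) x q⟫ := by
        intro p q
        rw [hinner, hsymm2, ← hinner]
        exact real_inner_comm _ _
      apply psd_op_norm_bound _ _ _ h1ηM _ _ v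
      · intro p q
        simp only [ContinuousLinearMap.add_apply, ContinuousLinearMap.id_apply,
          ContinuousLinearMap.smul_apply, inner_add_left, inner_add_right,
          inner_smul_left, inner_smul_right, RCLike.conj_to_real]
        rw [hAsymm]
      · intro p
        have := hAvv_l p
        simp only [ContinuousLinearMap.add_apply, ContinuousLinearMap.id_apply,
          ContinuousLinearMap.smul_apply, inner_add_left, inner_smul_left,
          RCLike.conj_to_real, real_inner_self_eq_norm_sq]
        nlinarith [sq_nonneg ‖p‖]
      · intro p
        have := hAvv_u p
        simp only [ContinuousLinearMap.add_apply, ContinuousLinearMap.id_apply,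
          ContinuousLinearMap.smul_apply, inner_add_left, inner_smul_left,
          RCLike.conj_to_real, real_inner_self_eq_norm_sq]
        nlinarith
    have := convex_univ.norm_image_sub_le_of_norm_fderiv_le
      (f := fun x : (EuclideanSpace ℝ (Fin d)) => x + η • gradient (fun w : (EuclideanSpace ℝ (Fin d)) => F (w, y)) x)
      (fun x _ => hdiff x) (fun x _ => hbound x) (Set.mem_univ b) (Set.mem_univ a)
    simpa using this
  -- step 2: Lipschitz in the second variable at ustar
  have hΨcd : ContDiff ℝ (⊤ : ℕ∞) (fun y : (EuclideanSpace ℝ (Fin d)) => gradient (fun w : (EuclideanSpace ℝ (Fin d)) => F (w, y)) ustar) := by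
    have hfds : ∀ x y : (EuclideanSpace ℝ (Fin d)), fderiv ℝ (fun w : (EuclideanSpace ℝ (Fin d)) => F (w, y)) x
        = (fderiv ℝ F (x, y)).comp (ContinuousLinearMap.inl ℝ (EuclideanSpace ℝ (Fin d)) (EuclideanSpace ℝ (Fin d))) := by
      intro x y
      have h1 : HasFDerivAt (fun w : (EuclideanSpace ℝ (Fin d)) => (w, y)) (ContinuousLinearMap.inl ℝ (EuclideanSpace ℝ (Fin d)) (EuclideanSpace ℝ (Fin d))) x :=
        (hasFDerivAt_id x).prodMk (hasFDerivAt_const y x)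
      have h2 : HasFDerivAt F (fderiv ℝ F (x, y)) (x, y) :=
        (hF.differentiable (by simp) (x, y)).hasFDerivAt
      exact (h2.comp x h1).fderiv
    have heq : (fun y : (EuclideanSpace ℝ (Fin d)) => gradient (fun w : (EuclideanSpace ℝ (Fin d)) => F (w, y)) ustar)
        = fun y : (EuclideanSpace ℝ (Fin d)) => (toDual ℝ (EuclideanSpace ℝ (Fin d))).symm
            ((fderiv ℝ F (ustar, y)).comp (ContinuousLinearMap.inl ℝ (EuclideanSpace ℝ (Fin d)) (EuclideanSpace ℝ (Fin d)))) := by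
      funext y
      show (toDual ℝ (EuclideanSpace ℝ (Fin d))).symm (fderiv ℝ (fun w : (EuclideanSpace ℝ (Fin d)) => F (w, y)) ustar) = _
      rw [hfds]
    rw [heq]
    apply (toDual ℝ (EuclideanSpace ℝ (Fin d))).symm.contDiff.comp
    have hd : ContDiff ℝ (⊤ : ℕ∞) (fun y : (EuclideanSpace ℝ (Fin d)) => fderiv ℝ F (ustar, y)) := by
      have : (fun y : (EuclideanSpace ℝ (Fin d)) => fderiv ℝ F (ustar, y))
          = (fderiv ℝ F) ∘ (fun y : (EuclideanSpace ℝ (Fin d)) => (ustar, y)) := rfl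
      rw [this]
      exact (hF.fderiv_right (by simp)).comp (contDiff_const.prodMk contDiff_id)
    exact (((ContinuousLinearMap.compL ℝ (EuclideanSpace ℝ (Fin d)) ((EuclideanSpace ℝ (Fin d)) × (EuclideanSpace ℝ (Fin d))) ℝ).flip
      (ContinuousLinearMap.inl ℝ (EuclideanSpace ℝ (Fin d)) (EuclideanSpace ℝ (Fin d)))).contDiff).comp hd
  have hΨlip : ∀ a b : (EuclideanSpace ℝ (Fin d)),
      ‖gradient (fun w : (EuclideanSpace ℝ (Fin d)) => F (w, a)) ustar - gradient (fun w : (EuclideanSpace ℝ (Fin d)) => F (w, b)) ustar‖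
        ≤ M' * ‖a - b‖ := by
    intro a b
    have := convex_univ.norm_image_sub_le_of_norm_fderiv_le
      (f := fun y : (EuclideanSpace ℝ (Fin d)) => gradient (fun w : (EuclideanSpace ℝ (Fin d)) => F (w, y)) ustar)
      (fun x _ => (hΨcd.differentiable (by simp) x)) (fun x _ => hCross ustar x)
      (Set.mem_univ b) (Set.mem_univ a)
    simpa using this
  -- gradient vanishes at the maximizer
  have hmax : gradient (fun w : (EuclideanSpace ℝ (Fin d)) => F (w, ustar)) ustar = 0 := by
    have h0 : fderiv ℝ (fun w : (EuclideanSpace ℝ (Fin d)) => F (w, ustar)) ustar = 0 :=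
      IsLocalMax.fderiv_eq_zero (Filter.Eventually.of_forall hstar)
    show (toDual ℝ (EuclideanSpace ℝ (Fin d))).symm (fderiv ℝ (fun w : (EuclideanSpace ℝ (Fin d)) => F (w, ustar)) ustar) = 0
    rw [h0, map_zero]
  -- one-step contraction
  have hcontract : ∀ k : ℕ,
      ‖u (k + 1) - ustar‖ ≤ (1 + η * M + η * M') * ‖u k - ustar‖ := by
    intro k
    have hdecomp : u (k + 1) - ustar
        = ((u k + η • gradient (fun w : (EuclideanSpace ℝ (Fin d)) => F (w, u k)) (u k))
            - (ustar + η • gradient (fun w : (EuclideanSpace ℝ (Fin d)) => F (w, u k)) ustar))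
          + η • (gradient (fun w : (EuclideanSpace ℝ (Fin d)) => F (w, u k)) ustar
              - gradient (fun w : (EuclideanSpace ℝ (Fin d)) => F (w, ustar)) ustar) := by
      rw [hu k, hmax, sub_zero]
      module
    calc ‖u (k + 1) - ustar‖
        ≤ ‖(u k + η • gradient (fun w : (EuclideanSpace ℝ (Fin d)) => F (w, u k)) (u k))
            - (ustar + η • gradient (fun w : (EuclideanSpace ℝ (Fin d)) => F (w, u k)) ustar)‖
          + ‖η • (gradient (fun w : (EuclideanSpace ℝ (Fin d)) => F (w, u k)) ustar
              - gradient (fun w : (EuclideanSpace ℝ (Fin d)) => F (w, ustar)) ustar)‖ := by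
          rw [hdecomp]; exact norm_add_le _ _
      _ ≤ (1 + η * M) * ‖u k - ustar‖ + η * (M' * ‖u k - ustar‖) := by
          apply add_le_add (hstep (u k) (u k) ustar)
          rw [norm_smul, Real.norm_eq_abs, abs_of_pos hη0]
          exact mul_le_mul_of_nonneg_left (hΨlip (u k) ustar) hη0.le
      _ = (1 + η * M + η * M') * ‖u k - ustar‖ := by ring
  -- geometric bound
  have hgeo : ∀ k : ℕ, ‖u k - ustar‖ ≤ (1 + η * M + η * M') ^ k * ‖u 0 - ustar‖ := by
    intro k
    induction k with
    | zero => simp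
    | succ n ih =>
      calc ‖u (n + 1) - ustar‖ ≤ (1 + η * M + η * M') * ‖u n - ustar‖ := hcontract n
        _ ≤ (1 + η * M + η * M') * ((1 + η * M + η * M') ^ n * ‖u 0 - ustar‖) :=
            mul_le_mul_of_nonneg_left ih hβpos.le
        _ = (1 + η * M + η * M') ^ (n + 1) * ‖u 0 - ustar‖ := by ring
  refine ⟨⟨hβpos, hβlt⟩, hgeo, ?_⟩
  have htend : Filter.Tendsto (fun k : ℕ => (1 + η * M + η * M') ^ k * ‖u 0 - ustar‖)
      Filter.atTop (nhds 0) := by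
    simpa using (tendsto_pow_atTop_nhds_zero_of_lt_one hβpos.le hβlt).mul_const ‖u 0 - ustar‖
  rw [tendsto_iff_dist_tendsto_zero]
  refine squeeze_zero (fun k => dist_nonneg) (fun k => ?_) htend
  rw [dist_eq_norm]
  exact hgeo k
end

section
/- Let E = ℝ^d with the Euclidean norm, let F : E × E → ℝ be smooth and satisfy conditions (i) and (ii) with constants L ≤ M < 0 and 0 ≤ M' < −M, let N_t ≥ 1 be an integer, and suppose there exists u* ∈ E with F(u, u*) ≤ F(u*, u*) for all u ∈ E. Write T_{u'}(w) := w + η·∇₁F(w,u'). Then for every η with 0 < η < −1/(2L), the sequence defined by u_{k+1} = T_{u_k}^{N_t}(u_k) (N_t partial derivative steps with behavior fixed at u_k) from any initial point u₀ satisfies ‖u_k − u*‖ ≤ β^k·‖u₀ − u*‖ with β := 1 + η·M + η·M' ∈ (0,1); in particular u_k converges to u*. -/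
open InnerProductSpace
open scoped RealInnerProductSpace

section
variable {E : Type*} [NormedAddCommGroup E] [InnerProductSpace ℝ E] [CompleteSpace E]

omit [CompleteSpace E] in
theorem pd_aux_symm_bound
    (B : E →L[ℝ] E) (c : ℝ) (hc : 0 ≤ c)
    (hsymm : ∀ v w, ⟪B v, w⟫_ℝ = ⟪B w, v⟫_ℝ)
    (hbound : ∀ v, |⟪B v, v⟫_ℝ| ≤ c * ‖v‖^2) (v : E) : ‖B v‖ ≤ c * ‖v‖ := by
  rcases eq_or_ne (B v) 0 with h | h
  · rw [h, norm_zero]; positivity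
  have hv : v ≠ 0 := by rintro rfl; simp at h
  have hBv : (0:ℝ) < ‖B v‖ := norm_pos_iff.mpr h
  have hvn : (0:ℝ) < ‖v‖ := norm_pos_iff.mpr hv
  set w := (‖v‖ / ‖B v‖) • B v with hw
  have hwnorm : ‖w‖ = ‖v‖ := by
    rw [hw, norm_smul, Real.norm_eq_abs, abs_div, abs_norm, abs_norm,
      div_mul_cancel₀ _ hBv.ne']
  have key : ⟪B v, w⟫_ℝ = (⟪B (v+w), v+w⟫_ℝ - ⟪B (v-w), v-w⟫_ℝ)/4 := by
    simp only [map_add, map_sub, inner_add_left, inner_add_right, inner_sub_left,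
      inner_sub_right]
    rw [hsymm w v]; ring
  have h1 : ⟪B v, w⟫_ℝ ≤ c * ‖v‖^2 := by
    have e1 := (abs_le.mp (hbound (v+w))).2
    have e2 := (abs_le.mp (hbound (v-w))).1
    have p1 : ‖v+w‖^2 = ‖v‖^2 + 2*⟪v,w⟫_ℝ + ‖w‖^2 := norm_add_sq_real v w
    have p2 : ‖v-w‖^2 = ‖v‖^2 - 2*⟪v,w⟫_ℝ + ‖w‖^2 := norm_sub_sq_real v w
    rw [hwnorm] at p1 p2
    rw [p1] at e1; rw [p2] at e2
    rw [key]; linarith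
  have h2 : ⟪B v, w⟫_ℝ = ‖v‖ * ‖B v‖ := by
    rw [hw, real_inner_smul_right, real_inner_self_eq_norm_sq]
    field_simp
  rw [h2] at h1
  nlinarith

theorem pd_aux_lip
    (f : E → ℝ) (hf : ContDiff ℝ (⊤ : ℕ∞) f) (L M η ρ : ℝ)
    (hL : ∀ x v, L * ‖v‖^2 ≤ iteratedFDeriv ℝ 2 f x ![v, v])
    (hM : ∀ x v, iteratedFDeriv ℝ 2 f x ![v, v] ≤ M * ‖v‖^2)
    (hη0 : 0 < η) (hρ : ρ = 1 + η * M) (h1 : 0 ≤ 1 + η * L) (hLM : L ≤ M)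
    (w v : E) :
    ‖(w + η • gradient f w) - (v + η • gradient f v)‖ ≤ ρ * ‖w - v‖ := by
  have hρ0 : 0 ≤ ρ := by nlinarith [mul_le_mul_of_nonneg_left hLM hη0.le]
  have hgeq : gradient f = (toDual ℝ E).symm ∘ (fderiv ℝ f) := rfl
  have hgrad : ContDiff ℝ (⊤ : ℕ∞) (gradient f) := by
    rw [hgeq]; exact ((toDual ℝ E).symm.contDiff).comp (hf.fderiv_right (by simp))
  have hdg : Differentiable ℝ (gradient f) := hgrad.differentiable (by simp)
  have hdf' : Differentiable ℝ (fderiv ℝ f) := (hf.fderiv_right (m := (⊤ : ℕ∞)) (by simp)).differentiable (by simp)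
  have hinner : ∀ x v w', ⟪fderiv ℝ (gradient f) x v, w'⟫_ℝ = fderiv ℝ (fderiv ℝ f) x v w' := by
    intro x v w'
    rw [hgeq, LinearIsometryEquiv.comp_fderiv]
    simp only [ContinuousLinearMap.coe_comp', Function.comp_apply, ContinuousLinearEquiv.coe_coe,
      LinearIsometryEquiv.coe_toContinuousLinearEquiv]
    exact toDual_symm_apply
  have hsym : ∀ x v w', fderiv ℝ (fderiv ℝ f) x v w' = fderiv ℝ (fderiv ℝ f) x w' v :=
    fun x v w' => second_derivative_symmetric
      (fun y => (hf.differentiable (by simp) y).hasFDerivAt) ((hdf' x).hasFDerivAt) v w'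
  have hT : ∀ x : E, HasFDerivAt (fun x => x + η • gradient f x)
      (ContinuousLinearMap.id ℝ E + η • fderiv ℝ (gradient f) x) x :=
    fun x => (hasFDerivAt_id x).add (((hdg x).hasFDerivAt).const_smul η)
  have hquad : ∀ (x z : E), L * ‖z‖^2 ≤ fderiv ℝ (fderiv ℝ f) x z z ∧
      fderiv ℝ (fderiv ℝ f) x z z ≤ M * ‖z‖^2 := by
    intro x z
    have hiter : iteratedFDeriv ℝ 2 f x ![z, z] = fderiv ℝ (fderiv ℝ f) x z z := by
      rw [iteratedFDeriv_two_apply]; simp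
    constructor
    · rw [← hiter]; exact hL x z
    · rw [← hiter]; exact hM x z
  have hbound : ∀ x, ‖fderiv ℝ (fun x => x + η • gradient f x) x‖ ≤ ρ := by
    intro x
    rw [(hT x).fderiv]
    refine ContinuousLinearMap.opNorm_le_bound _ hρ0 ?_
    intro z
    refine pd_aux_symm_bound _ ρ hρ0 ?_ ?_ z
    · intro a b
      simp only [ContinuousLinearMap.add_apply, ContinuousLinearMap.coe_smul',
        Pi.smul_apply, ContinuousLinearMap.id_apply, inner_add_left, real_inner_smul_left]
      rw [hinner, hinner, hsym, real_inner_comm]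
    · intro z'
      have q := hinner x z' z'
      obtain ⟨ql, qu⟩ := hquad x z'
      have hc : ⟪(ContinuousLinearMap.id ℝ E + η • fderiv ℝ (gradient f) x) z', z'⟫_ℝ
          = ‖z'‖^2 + η * fderiv ℝ (fderiv ℝ f) x z' z' := by
        simp only [ContinuousLinearMap.add_apply, ContinuousLinearMap.coe_smul',
          Pi.smul_apply, ContinuousLinearMap.id_apply, inner_add_left, real_inner_smul_left]
        rw [q, real_inner_self_eq_norm_sq]
      rw [hc, abs_le]
      constructor
      · nlinarith [sq_nonneg ‖z'‖, mul_le_mul_of_nonneg_left ql hη0.le]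
      · nlinarith [mul_le_mul_of_nonneg_left qu hη0.le]
  have := Convex.norm_image_sub_le_of_norm_fderiv_le (s := Set.univ)
    (fun x _ => (hT x).differentiableAt) (fun x _ => hbound x) convex_univ
    (Set.mem_univ v) (Set.mem_univ w)
  simpa using this

theorem pd_aux_cross
    (F : E × E → ℝ) (hF : ContDiff ℝ (⊤ : ℕ∞) F) (M' : ℝ)
    (hCross : ∀ u u' : E, ‖fderiv ℝ (fun w' => gradient (fun w => F (w, w')) u) u'‖ ≤ M')
    (x a b : E) :
    ‖gradient (fun w => F (w, a)) x - gradient (fun w => F (w, b)) x‖ ≤ M' * ‖a - b‖ := by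
  have hGeq : (fun w' => gradient (fun w => F (w, w')) x)
      = fun w' => (toDual ℝ E).symm ((fderiv ℝ F (x, w')).comp (ContinuousLinearMap.inl ℝ E E)) := by
    funext w'
    have h1 : fderiv ℝ (fun w => F (w, w')) x
        = (fderiv ℝ F (x, w')).comp (ContinuousLinearMap.inl ℝ E E) :=
      (HasFDerivAt.comp x ((hF.differentiable (by simp) (x, w')).hasFDerivAt)
        (hasFDerivAt_prodMk_left x w')).fderiv
    show (toDual ℝ E).symm (fderiv ℝ (fun w => F (w, w')) x) = _
    rw [h1]
  have hD : Differentiable ℝ (fun w' : E => fderiv ℝ F (x, w')) :=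
    ((hF.fderiv_right (m := (⊤ : ℕ∞)) (by simp)).differentiable (by simp)).comp
      ((differentiable_const x).prodMk differentiable_id)
  have hG : Differentiable ℝ (fun w' => gradient (fun w => F (w, w')) x) := by
    rw [hGeq]
    exact ((toDual ℝ E).symm.contDiff.differentiable one_ne_zero).comp
      (hD.clm_comp (differentiable_const _))
  have := Convex.norm_image_sub_le_of_norm_fderiv_le (s := Set.univ)
    (fun w' _ => hG w') (fun w' _ => hCross x w') convex_univ
    (Set.mem_univ b) (Set.mem_univ a)
  simpa using this

theorem pd_aux_fix
    (f : E → ℝ) (ustar : E) (hmax : ∀ u, f u ≤ f ustar) : gradient f ustar = 0 := by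
  have h : fderiv ℝ f ustar = 0 :=
    IsLocalMax.fderiv_eq_zero (Filter.Eventually.of_forall hmax)
  show (toDual ℝ E).symm (fderiv ℝ f ustar) = 0
  rw [h]; simp

end

/-- convergence of the iteration `u_{k+1} = T_{u_k}^{N_t}(u_k)`,
where `T_{u'}(w) = w + η • ∇₁F(w, u')`, to the point `u*` maximizing `F(·, u*)`,
at geometric rate `β = 1 + η·M + η·M' ∈ (0,1)`. -/
theorem pd_multi_step_iteration_converges (d : ℕ)
    (F : (EuclideanSpace ℝ (Fin d)) × (EuclideanSpace ℝ (Fin d)) → ℝ)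
    (hF : ContDiff ℝ (⊤ : ℕ∞) F)
    (L M M' : ℝ) (hLM : L ≤ M) (hM0 : M < 0) (hM'0 : 0 ≤ M') (hM' : M' < -M)
    (hHessLower : ∀ u u' v : EuclideanSpace ℝ (Fin d),
      L * ‖v‖ ^ 2 ≤ iteratedFDeriv ℝ 2 (fun w => F (w, u')) u ![v, v])
    (hHessUpper : ∀ u u' v : EuclideanSpace ℝ (Fin d),
      iteratedFDeriv ℝ 2 (fun w => F (w, u')) u ![v, v] ≤ M * ‖v‖ ^ 2)
    (hCross : ∀ u u' : EuclideanSpace ℝ (Fin d),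
      ‖fderiv ℝ (fun w' => gradient (fun w => F (w, w')) u) u'‖ ≤ M')
    (Nt : ℕ) (hNt : 1 ≤ Nt)
    (ustar : EuclideanSpace ℝ (Fin d))
    (hstar : ∀ u : EuclideanSpace ℝ (Fin d), F (u, ustar) ≤ F (ustar, ustar))
    (η : ℝ) (hη0 : 0 < η) (hη : η < -1 / (2 * L))
    (u : ℕ → EuclideanSpace ℝ (Fin d))
    (hu : ∀ k : ℕ,
      u (k + 1) = (fun w => w + η • gradient (fun z => F (z, u k)) w)^[Nt] (u k)) :
    (0 < 1 + η * M + η * M' ∧ 1 + η * M + η * M' < 1) ∧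
    (∀ k : ℕ, ‖u k - ustar‖ ≤ (1 + η * M + η * M') ^ k * ‖u 0 - ustar‖) ∧
    Filter.Tendsto u Filter.atTop (nhds ustar) := by
  have hL0 : L < 0 := lt_of_le_of_lt hLM hM0
  have h2L : 2 * L < 0 := by linarith
  have hkey1 : η * (2 * L) > -1 := by
    have hmul := mul_lt_mul_of_neg_right hη h2L
    have : (-1 / (2 * L)) * (2 * L) = -1 := div_mul_cancel₀ (-1) h2L.ne
    linarith
  have h1 : 0 ≤ 1 + η * L := by nlinarith
  have hρ0 : 0 < 1 + η * M := by nlinarith [mul_le_mul_of_nonneg_left hLM hη0.le]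
  have hρ1 : 1 + η * M < 1 := by nlinarith [mul_pos hη0 (show (0:ℝ) < -M by linarith)]
  have hβ0 : 0 < 1 + η * M + η * M' := by nlinarith [mul_nonneg hη0.le hM'0]
  have hβ1 : 1 + η * M + η * M' < 1 := by nlinarith [mul_pos hη0 (show (0:ℝ) < -M - M' by linarith)]
  set β : ℝ := 1 + η * M + η * M' with hβ
  have hkey : (1 + η * M) * β + η * M' ≤ β := by
    rw [hβ]
    nlinarith [mul_nonneg hρ0.le (show (0:ℝ) ≤ -(η*M) - η*M' by
      nlinarith [mul_pos hη0 (show (0:ℝ) < -M - M' by linarith)])]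
  -- gradient vanishes at ustar
  have hg0 : gradient (fun z => F (z, ustar)) ustar = 0 :=
    pd_aux_fix (fun z => F (z, ustar)) ustar hstar
  -- contraction of T for fixed u'
  have hsmooth1 : ∀ u' : EuclideanSpace ℝ (Fin d), ContDiff ℝ (⊤ : ℕ∞) (fun z => F (z, u')) :=
    fun u' => hF.comp (contDiff_id.prodMk contDiff_const)
  have lipT : ∀ (u' w v : EuclideanSpace ℝ (Fin d)),
      ‖(w + η • gradient (fun z => F (z, u')) w) - (v + η • gradient (fun z => F (z, u')) v)‖
        ≤ (1 + η * M) * ‖w - v‖ :=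
    fun u' w v => pd_aux_lip (fun z => F (z, u')) (hsmooth1 u') L M η _
      (fun x v => hHessLower x u' v) (fun x v => hHessUpper x u' v) hη0 rfl h1 hLM w v
  -- one step bound
  have step : ∀ (u' w : EuclideanSpace ℝ (Fin d)),
      ‖(w + η • gradient (fun z => F (z, u')) w) - ustar‖
        ≤ (1 + η * M) * ‖w - ustar‖ + η * M' * ‖u' - ustar‖ := by
    intro u' w
    have e1 := lipT u' w ustar
    have e2 : ‖gradient (fun z => F (z, u')) ustar‖ ≤ M' * ‖u' - ustar‖ := by
      have h := pd_aux_cross F hF M' hCross ustar u' ustar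
      rwa [hg0, sub_zero] at h
    have hdecomp : (w + η • gradient (fun z => F (z, u')) w) - ustar
        = ((w + η • gradient (fun z => F (z, u')) w)
            - (ustar + η • gradient (fun z => F (z, u')) ustar))
          + η • gradient (fun z => F (z, u')) ustar := by abel
    calc ‖(w + η • gradient (fun z => F (z, u')) w) - ustar‖
        ≤ ‖(w + η • gradient (fun z => F (z, u')) w)
            - (ustar + η • gradient (fun z => F (z, u')) ustar)‖
          + ‖η • gradient (fun z => F (z, u')) ustar‖ := by
          rw [hdecomp]; exact norm_add_le _ _
      _ ≤ (1 + η * M) * ‖w - ustar‖ + η * (M' * ‖u' - ustar‖) := by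
          have h3 : ‖η • gradient (fun z => F (z, u')) ustar‖
              = η * ‖gradient (fun z => F (z, u')) ustar‖ := by
            rw [norm_smul, Real.norm_eq_abs, abs_of_pos hη0]
          rw [h3]
          exact add_le_add e1 (mul_le_mul_of_nonneg_left e2 hη0.le)
      _ = (1 + η * M) * ‖w - ustar‖ + η * M' * ‖u' - ustar‖ := by ring
  -- iterate bound
  have iter : ∀ (u' : EuclideanSpace ℝ (Fin d)) (n : ℕ),
      ‖(fun w => w + η • gradient (fun z => F (z, u')) w)^[n+1] u' - ustar‖
        ≤ β * ‖u' - ustar‖ := by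
    intro u' n
    induction n with
    | zero =>
      have h0 : (fun w => w + η • gradient (fun z => F (z, u')) w)^[0+1] u'
          = u' + η • gradient (fun z => F (z, u')) u' := by
        simp [Function.iterate_one]
      rw [h0, hβ]
      calc ‖u' + η • gradient (fun z => F (z, u')) u' - ustar‖
          ≤ (1 + η * M) * ‖u' - ustar‖ + η * M' * ‖u' - ustar‖ := step u' u'
        _ = (1 + η * M + η * M') * ‖u' - ustar‖ := by ring
    | succ n ih =>
      rw [Function.iterate_succ_apply']
      have h4 := step u' ((fun w => w + η • gradient (fun z => F (z, u')) w)^[n+1] u')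
      have hD : (0:ℝ) ≤ ‖u' - ustar‖ := norm_nonneg _
      have h5 : (1 + η * M) * ‖(fun w => w + η • gradient (fun z => F (z, u')) w)^[n+1] u' - ustar‖
          ≤ (1 + η * M) * (β * ‖u' - ustar‖) := mul_le_mul_of_nonneg_left ih hρ0.le
      calc ‖((fun w => w + η • gradient (fun z => F (z, u')) w)^[n+1] u'
              + η • gradient (fun z => F (z, u'))
                  ((fun w => w + η • gradient (fun z => F (z, u')) w)^[n+1] u')) - ustar‖
          ≤ (1 + η * M) * (β * ‖u' - ustar‖) + η * M' * ‖u' - ustar‖ := by linarith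
        _ = ((1 + η * M) * β + η * M') * ‖u' - ustar‖ := by ring
        _ ≤ β * ‖u' - ustar‖ := mul_le_mul_of_nonneg_right hkey hD
  -- per-iteration contraction
  have hstep : ∀ k : ℕ, ‖u (k+1) - ustar‖ ≤ β * ‖u k - ustar‖ := by
    intro k
    rw [hu k]
    obtain ⟨m, hm⟩ : ∃ m, Nt = m + 1 := ⟨Nt - 1, (Nat.succ_pred_eq_of_pos hNt).symm⟩
    rw [hm]
    exact iter (u k) m
  -- geometric bound
  have hgeom : ∀ k : ℕ, ‖u k - ustar‖ ≤ β ^ k * ‖u 0 - ustar‖ := by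
    intro k
    induction k with
    | zero => simp
    | succ k ih =>
      calc ‖u (k+1) - ustar‖ ≤ β * ‖u k - ustar‖ := hstep k
        _ ≤ β * (β ^ k * ‖u 0 - ustar‖) := mul_le_mul_of_nonneg_left ih hβ0.le
        _ = β ^ (k+1) * ‖u 0 - ustar‖ := by ring
  refine ⟨⟨hβ0, hβ1⟩, hgeom, ?_⟩
  have hnorm0 : Filter.Tendsto (fun k => ‖u k - ustar‖) Filter.atTop (nhds 0) := by
    refine squeeze_zero (fun k => norm_nonneg _) hgeom ?_
    have := (tendsto_pow_atTop_nhds_zero_of_lt_one hβ0.le hβ1).mul_const ‖u 0 - ustar‖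
    simpa using this
  exact tendsto_iff_norm_sub_tendsto_zero.mpr hnorm0
end

section
/- Let X be a finite nonempty type, a : Finset X → ℝ a set function, and n ≥ 1. If π* is a greedy policy (J(π, π*) ≤ J(π*, π*) for every set-conditioned policy π), then every n-tuple (x₀, …, x_{n−1}) ∈ X^n with positive greedy-sampling probability, i.e. with ∏_{i<n} π*(x_i ∣ {x₀, …, x_{i−1}}) > 0, is an exact greedy solution: for every t < n, x_t maximizes x ↦ Δ_a(x ∣ {x₀, …, x_{t−1}}) over all x ∈ X. -/
open Finset

/-- Marginal gain `Δ_a(x ∣ B) = a(B ∪ {x}) − a(B)`. -/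
def margGain {X : Type*} [DecidableEq X] (a : Finset X → ℝ) (x : X) (B : Finset X) : ℝ :=
  a (insert x B) - a B

/-- The set `{x₀, …, x_{i−1}}` of the first `i` entries of the tuple `xs`. -/
def prefSet {X : Type*} [DecidableEq X] {k : ℕ} (xs : Fin k → X) (i : ℕ) : Finset X :=
  (Finset.univ.filter (fun j : Fin k => (j : ℕ) < i)).image xs

/-- A set-conditioned policy: a probability mass function on `X` for each finite set. -/
def IsPolicy {X : Type*} [Fintype X] (π : Finset X → X → ℝ) : Prop :=
  (∀ (B : Finset X) (x : X), 0 ≤ π B x) ∧ ∀ B : Finset X, ∑ x : X, π B x = 1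

/-- The expected gain `J(π, π')` of policy `π` given behavior policy `π'`. -/
noncomputable def expGain {X : Type*} [Fintype X] [DecidableEq X]
    (a : Finset X → ℝ) (n : ℕ) (π π' : Finset X → X → ℝ) : ℝ :=
  (1 / (n : ℝ)) * ∑ k : Fin n, ∑ xs : Fin (k : ℕ) → X,
    (∏ i : Fin (k : ℕ), π' (prefSet xs i) (xs i)) *
      ∑ x : X, π (prefSet xs k) x * margGain a x (prefSet xs k)

lemma prefSet_comp_castLE {X : Type*} [DecidableEq X] {m n : ℕ} (h : m ≤ n)
    (xs : Fin n → X) (i : ℕ) (hi : i ≤ m) :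
    prefSet (fun j : Fin m => xs (Fin.castLE h j)) i = prefSet xs i := by
  ext y
  simp only [prefSet, Finset.mem_image, Finset.mem_filter, Finset.mem_univ, true_and]
  constructor
  · rintro ⟨j, hj, rfl⟩
    exact ⟨Fin.castLE h j, by simpa using hj, rfl⟩
  · rintro ⟨j, hj, rfl⟩
    exact ⟨⟨(j : ℕ), lt_of_lt_of_le hj hi⟩, hj, rfl⟩

/-- any tuple with positive greedy-sampling probability under a
greedy policy is an exact greedy solution. -/
theorem greedy_policy_samples_exact_greedy {X : Type*} [Fintype X] [DecidableEq X] [Nonempty X]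
    (a : Finset X → ℝ) (n : ℕ) (hn : 1 ≤ n)
    (πstar : Finset X → X → ℝ) (hπstar : IsPolicy πstar)
    (hgreedy : ∀ π : Finset X → X → ℝ, IsPolicy π →
      expGain a n π πstar ≤ expGain a n πstar πstar)
    (xs : Fin n → X)
    (hpos : 0 < ∏ i : Fin n, πstar (prefSet xs i) (xs i)) :
    ∀ t : Fin n, ∀ x : X,
      margGain a x (prefSet xs t) ≤ margGain a (xs t) (prefSet xs t) := by
  intro t x
  -- each factor is positive
  have hfac : ∀ i : Fin n, 0 < πstar (prefSet xs i) (xs i) := by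
    intro i
    rcases (hπstar.1 (prefSet xs i) (xs i)).lt_or_eq with h | h
    · exact h
    · exfalso
      rw [Finset.prod_eq_zero (Finset.mem_univ i) h.symm] at hpos
      exact lt_irrefl 0 hpos
  set B : Finset X := prefSet xs (t : ℕ) with hB
  set Sstar : ℝ := ∑ y : X, πstar B y * margGain a y B with hSstar
  -- the weight of reaching B
  set W : ℝ := ∑ k : Fin n, ∑ ys : Fin (k : ℕ) → X,
      (∏ i : Fin (k : ℕ), πstar (prefSet ys i) (ys i)) *
        (if prefSet ys (k : ℕ) = B then (1 : ℝ) else 0) with hWdef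
  have hWnonneg_term : ∀ (k : Fin n) (ys : Fin (k : ℕ) → X),
      0 ≤ (∏ i : Fin (k : ℕ), πstar (prefSet ys i) (ys i)) *
        (if prefSet ys (k : ℕ) = B then (1 : ℝ) else 0) := by
    intro k ys
    apply mul_nonneg
    · exact Finset.prod_nonneg fun i _ => hπstar.1 _ _
    · split <;> norm_num
  have hWpos : 0 < W := by
    rw [hWdef]
    apply Finset.sum_pos' (fun k _ => Finset.sum_nonneg fun ys _ => hWnonneg_term k ys)
    refine ⟨t, Finset.mem_univ t, ?_⟩
    apply Finset.sum_pos' (fun ys _ => hWnonneg_term t ys)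
    refine ⟨fun j : Fin (t : ℕ) => xs (Fin.castLE t.isLt.le j), Finset.mem_univ _, ?_⟩
    have hpref : ∀ i : ℕ, i ≤ (t : ℕ) →
        prefSet (fun j : Fin (t : ℕ) => xs (Fin.castLE t.isLt.le j)) i = prefSet xs i :=
      fun i hi => prefSet_comp_castLE t.isLt.le xs i hi
    rw [hpref (t : ℕ) le_rfl, if_pos rfl, mul_one]
    apply Finset.prod_pos
    intro i _
    rw [hpref (i : ℕ) i.isLt.le]
    exact hfac (Fin.castLE t.isLt.le i)
  -- key: every point's marginal gain is at most Sstar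
  have hkey : ∀ xh : X, margGain a xh B ≤ Sstar := by
    intro xh
    set π : Finset X → X → ℝ :=
      fun C y => if C = B then (if y = xh then (1 : ℝ) else 0) else πstar C y with hπdef
    have hpol : IsPolicy π := by
      constructor
      · intro C y
        by_cases hC : C = B
        · simp only [hπdef, if_pos hC]
          split <;> norm_num
        · simp only [hπdef, if_neg hC]
          exact hπstar.1 C y
      · intro C
        by_cases hC : C = B
        · simp [hπdef, hC]
        · simp only [hπdef, if_neg hC]
          exact hπstar.2 C
    have hdiff : expGain a n πstar πstar - expGain a n π πstar
        = (1 / (n : ℝ)) * ((Sstar - margGain a xh B) * W) := by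
      rw [expGain, expGain, ← mul_sub]
      congr 1
      rw [hWdef, Finset.mul_sum, ← Finset.sum_sub_distrib]
      apply Finset.sum_congr rfl
      intro k _
      rw [Finset.mul_sum, ← Finset.sum_sub_distrib]
      apply Finset.sum_congr rfl
      intro ys _
      rw [← mul_sub]
      by_cases hC : prefSet ys (k : ℕ) = B
      · rw [hC, if_pos rfl]
        have hπB : ∑ y : X, π B y * margGain a y B = margGain a xh B := by
          simp [hπdef]
        rw [hπB, ← hSstar]
        ring
      · rw [if_neg hC]
        have hπC : ∀ y : X, π (prefSet ys (k : ℕ)) y = πstar (prefSet ys (k : ℕ)) y := by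
          intro y; simp [hπdef, hC]
        simp [hπC]
    have hle := hgreedy π hpol
    have h0 : 0 ≤ (1 / (n : ℝ)) * ((Sstar - margGain a xh B) * W) := by
      rw [← hdiff]; linarith
    have hn' : 0 < (1 / (n : ℝ)) := by
      have : (0 : ℝ) < n := by exact_mod_cast Nat.lt_of_lt_of_le Nat.zero_lt_one hn
      positivity
    have h1 : 0 ≤ (Sstar - margGain a xh B) * W :=
      (mul_nonneg_iff_of_pos_left hn').mp h0
    have h2 : 0 ≤ Sstar - margGain a xh B :=
      (mul_nonneg_iff_of_pos_right hWpos).mp h1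
    linarith
  -- conclude Sstar = margGain a (xs t) B
  have hsum0 : ∑ y : X, πstar B y * (Sstar - margGain a y B) = 0 := by
    have : ∑ y : X, πstar B y * (Sstar - margGain a y B)
        = (∑ y : X, πstar B y) * Sstar - ∑ y : X, πstar B y * margGain a y B := by
      rw [Finset.sum_mul, ← Finset.sum_sub_distrib]
      apply Finset.sum_congr rfl
      intro y _
      ring
    rw [this, hπstar.2 B, one_mul, ← hSstar, sub_self]
  have heach := (Finset.sum_eq_zero_iff_of_nonneg
    (fun y _ => mul_nonneg (hπstar.1 B y) (sub_nonneg.2 (hkey y)))).mp hsum0 (xs t)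
    (Finset.mem_univ _)
  have hpt : 0 < πstar B (xs t) := hfac t
  have hfin : Sstar = margGain a (xs t) B := by
    rcases mul_eq_zero.mp heach with h | h
    · exact absurd h (ne_of_gt hpt)
    · linarith
  calc margGain a x B ≤ Sstar := hkey x
    _ = margGain a (xs t) B := hfin
end

section
/- Let X be a finite type, a : Finset X → ℝ a non-negative monotone set function, n ≥ 1, α ∈ (0,1], and let x₀, …, x_{n−1} be an α-approximate greedy sequence for a with partial sets B_i and output B_n. Let γ ∈ (0,1] be a lower bound on the submodularity ratio γ_{B_n, n}(a). Then for every B* ⊆ X with |B*| = n, a(B_n) ≥ (1 − exp(−α·γ))·a(B*). -/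
/-!
Let `dᵢ = a(B*) − a(Bᵢ)` be the gap after `i` greedy steps. Applied to `S = B* \ Bᵢ`, the
submodularity ratio and monotonicity give `γ·dᵢ ≤ Σ_{x ∈ S} Δ(x ∣ Bᵢ)`, and by greedy choice
each summand is at most `Δ(xᵢ ∣ Bᵢ)/α`; as `|S| ≤ n`, the step gains `Δ(xᵢ ∣ Bᵢ) ≥ (αγ/n)·dᵢ`.
Hence `dᵢ₊₁ ≤ (1 − αγ/n)·dᵢ ≤ exp(−αγ/n)·dᵢ` while the gap is non-negative, and after `n`
steps `dₙ ≤ exp(−αγ)·a(B*)`.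
-/

open Finset

/-- The partial set `B_i = {x₀, …, x_{i−1}}` of a sequence `xs`. -/
def partialSet {X : Type*} [DecidableEq X] {n : ℕ} (xs : Fin n → X) (i : ℕ) : Finset X :=
  (Finset.univ.filter (fun j : Fin n => (j : ℕ) < i)).image xs

section PartialSet

variable {X : Type*} [DecidableEq X] {n : ℕ} (xs : Fin n → X)

lemma partialSet_zero : partialSet xs 0 = ∅ := by
  simp [partialSet]

lemma partialSet_succ {i : ℕ} (hi : i < n) :
    partialSet xs (i + 1) = insert (xs ⟨i, hi⟩) (partialSet xs i) := by
  ext y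
  simp only [partialSet, mem_image, mem_filter, mem_univ, true_and, mem_insert,
    Nat.lt_succ_iff_lt_or_eq]
  constructor
  · rintro ⟨j, hj | rfl, rfl⟩
    · exact Or.inr ⟨j, hj, rfl⟩
    · exact Or.inl rfl
  · rintro (rfl | ⟨j, hj, rfl⟩)
    · exact ⟨⟨i, hi⟩, Or.inr rfl, rfl⟩
    · exact ⟨j, Or.inl hj, rfl⟩

lemma monotone_partialSet : Monotone (partialSet xs) := fun _ _ hij =>
  image_subset_image fun j => by
    simp only [mem_filter, mem_univ, true_and]
    exact fun hj => hj.trans_le hij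

end PartialSet

section MarginalGain

variable {X : Type*} [DecidableEq X] {a : Finset X → ℝ}

lemma monotone_of_margGain_nonneg (h : ∀ (B : Finset X) (x : X), 0 ≤ margGain a x B) :
    Monotone a :=
  Finset.monotone_iff_forall_le_insert.2 fun B x _ => sub_nonneg.1 (h B x)

lemma margGain_nonneg (ha : Monotone a) (x : X) (B : Finset X) : 0 ≤ margGain a x B :=
  sub_nonneg.2 (ha (subset_insert x B))

lemma mul_sub_le_mul_margGain_of_greedy (ha : Monotone a) {α γ : ℝ} (hα : 0 ≤ α) (hγ : 0 ≤ γ)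
    {n : ℕ} {B T : Finset X} {y : X} (hT : T.card ≤ n)
    (hratio : γ * (a (B ∪ T \ B) - a B) ≤ ∑ x ∈ T \ B, margGain a x B)
    (hgreedy : ∀ x ∉ B, α * margGain a x B ≤ margGain a y B) :
    α * γ * (a T - a B) ≤ n * margGain a y B := by
  have hgap : γ * (a T - a B) ≤ γ * (a (B ∪ T \ B) - a B) := by
    rw [union_sdiff_self_eq_union]
    gcongr
    exact ha subset_union_right
  have hsum : α * ∑ x ∈ T \ B, margGain a x B ≤ (T \ B).card * margGain a y B := by
    rw [mul_sum]
    simpa using sum_le_card_nsmul _ _ _ fun x hx => hgreedy x (mem_sdiff.1 hx).2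
  have hcard : ((T \ B).card : ℝ) ≤ n := by
    exact_mod_cast (card_le_card sdiff_subset).trans hT
  calc α * γ * (a T - a B) ≤ α * ∑ x ∈ T \ B, margGain a x B := by
        rw [mul_assoc]; exact mul_le_mul_of_nonneg_left (hgap.trans hratio) hα
    _ ≤ (T \ B).card * margGain a y B := hsum
    _ ≤ n * margGain a y B := mul_le_mul_of_nonneg_right hcard (margGain_nonneg ha y B)

end MarginalGain

/-- The contraction `dᵢ₊₁ ≤ (1 - t) dᵢ` is only useful while `dᵢ ≥ 0`; afterwards the
sequence stays negative because it is non-increasing. -/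
lemma le_exp_neg_mul_of_le_one_sub_mul {d : ℕ → ℝ} {t A : ℝ} (hA : 0 ≤ A) (h0 : d 0 ≤ A)
    (m : ℕ) (hstep : ∀ i < m, d (i + 1) ≤ (1 - t) * d i) (hanti : ∀ i < m, d (i + 1) ≤ d i) :
    d m ≤ Real.exp (-(t * m)) * A := by
  induction m with
  | zero => simpa using h0
  | succ m ih =>
    specialize ih (fun i hi => hstep i (by omega)) (fun i hi => hanti i (by omega))
    have hexp : Real.exp (-(t * ↑(m + 1))) * A = Real.exp (-t) * (Real.exp (-(t * m)) * A) := by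
      rw [← mul_assoc, ← Real.exp_add]; push_cast; ring_nf
    rw [hexp]
    rcases le_or_gt 0 (d m) with hd | hd
    · calc d (m + 1) ≤ (1 - t) * d m := hstep m m.lt_succ_self
        _ ≤ Real.exp (-t) * d m := by
          gcongr; linarith [Real.add_one_le_exp (-t)]
        _ ≤ Real.exp (-t) * (Real.exp (-(t * m)) * A) := by gcongr
    · have : 0 ≤ Real.exp (-t) * (Real.exp (-(t * m)) * A) := by positivity
      linarith [hanti m m.lt_succ_self]

theorem approx_greedy_near_submodular_bound_general {X : Type*} [DecidableEq X]
    (a : Finset X → ℝ)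
    (ha_nonneg : ∀ B : Finset X, 0 ≤ a B)
    (ha_mono : ∀ (B : Finset X) (x : X), 0 ≤ margGain a x B)
    (n : ℕ) (hn : 1 ≤ n)
    (α : ℝ) (hα0 : 0 < α)
    (xs : Fin n → X)
    (hgreedy : ∀ i : Fin n, ∀ x : X, x ∉ partialSet xs i →
      α * margGain a x (partialSet xs i) ≤ margGain a (xs i) (partialSet xs i))
    (γ : ℝ) (hγ0 : 0 < γ)
    (hγ : ∀ S : Finset X, S.card ≤ n → ∀ B' ⊆ partialSet xs n \ S,
      γ * (a (B' ∪ S) - a B') ≤ ∑ x ∈ S, margGain a x B')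
    (Bstar : Finset X) (hBstar : Bstar.card = n) :
    (1 - Real.exp (-(α * γ))) * a Bstar ≤ a (partialSet xs n) := by
  have ha := monotone_of_margGain_nonneg ha_mono
  have hnR : (0 : ℝ) < n := by exact_mod_cast hn
  have hstep : ∀ i < n, a Bstar - a (partialSet xs (i + 1)) ≤
      (1 - α * γ / n) * (a Bstar - a (partialSet xs i)) := by
    intro i hi
    have hB : partialSet xs i ⊆ partialSet xs n \ (Bstar \ partialSet xs i) := fun x hx =>
      mem_sdiff.2 ⟨monotone_partialSet xs hi.le hx, fun h => (mem_sdiff.1 h).2 hx⟩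
    have hgain := mul_sub_le_mul_margGain_of_greedy ha hα0.le hγ0.le hBstar.le
      (hγ _ (card_le_card sdiff_subset |>.trans hBstar.le) _ hB) (hgreedy ⟨i, hi⟩)
    rw [margGain, ← partialSet_succ xs hi] at hgain
    have hfrac : α * γ / n * (a Bstar - a (partialSet xs i)) ≤
        a (partialSet xs (i + 1)) - a (partialSet xs i) := by
      rw [div_mul_eq_mul_div, div_le_iff₀ hnR]; linarith
    linarith
  have hanti : ∀ i < n, a Bstar - a (partialSet xs (i + 1)) ≤ a Bstar - a (partialSet xs i) :=
    fun i _ => sub_le_sub_left (ha (monotone_partialSet xs i.le_succ)) _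
  have hgap := le_exp_neg_mul_of_le_one_sub_mul (d := fun i => a Bstar - a (partialSet xs i))
    (ha_nonneg Bstar) (by simp [partialSet_zero, ha_nonneg]) n hstep hanti
  rw [div_mul_cancel₀ _ hnR.ne'] at hgap
  linarith

/-- approximation guarantee of the α-approximate greedy algorithm
for a non-negative monotone set function with submodularity-ratio lower bound γ:
`a(B_n) ≥ (1 − exp(−α·γ))·a(B*)` for every `n`-subset `B*`. -/
theorem approx_greedy_near_submodular_bound {X : Type*} [Fintype X] [DecidableEq X]
    (a : Finset X → ℝ)
    (ha_nonneg : ∀ B : Finset X, 0 ≤ a B)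
    (ha_mono : ∀ (B : Finset X) (x : X), 0 ≤ margGain a x B)
    (n : ℕ) (hn : 1 ≤ n)
    (α : ℝ) (hα0 : 0 < α) (hα1 : α ≤ 1)
    (xs : Fin n → X)
    (hgreedy : ∀ i : Fin n, ∀ x : X, x ∉ partialSet xs i →
      α * margGain a x (partialSet xs i) ≤ margGain a (xs i) (partialSet xs i))
    (γ : ℝ) (hγ0 : 0 < γ) (hγ1 : γ ≤ 1)
    (hγ : ∀ S : Finset X, S.card ≤ n → ∀ B' ⊆ partialSet xs n \ S,
      γ * (a (B' ∪ S) - a B') ≤ ∑ x ∈ S, margGain a x B')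
    (Bstar : Finset X) (hBstar : Bstar.card = n) :
    (1 - Real.exp (-(α * γ))) * a Bstar ≤ a (partialSet xs n) :=
  approx_greedy_near_submodular_bound_general a ha_nonneg ha_mono n hn α hα0 xs hgreedy γ hγ0 hγ
    Bstar hBstar
end

section
/- Let X be a finite type, a : Finset X → ℝ a non-negative monotone set function, n ≥ 1, α ∈ (0,1], and let x₀, …, x_{n−1} be an α-approximate greedy sequence for a with partial sets B_i and output B_n. Let γ ∈ (0,1] be a lower bound on the submodularity ratio γ_{B_n, n}(a), and let B* ⊆ X with |B*| = n. Then for every i < n, Δ_a(x_i ∣ B_i) ≥ (α·γ/n)·(a(B*) − a(B_i)). -/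
open Finset

lemma mono_of_margGain {X : Type*} [DecidableEq X] (a : Finset X → ℝ)
    (ha_mono : ∀ (B : Finset X) (x : X), 0 ≤ margGain a x B) :
    ∀ (B C : Finset X), B ⊆ C → a B ≤ a C := by
  suffices h : ∀ k (B C : Finset X), (C \ B).card = k → B ⊆ C → a B ≤ a C by
    intro B C hBC; exact h _ B C rfl hBC
  intro k
  induction k with
  | zero =>
    intro B C hcard hBC
    have : C \ B = ∅ := Finset.card_eq_zero.mp hcard
    have : C ⊆ B := fun x hx => by
      by_contra hxB
      exact absurd (Finset.mem_sdiff.mpr ⟨hx, hxB⟩) (by simp [this])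
    rw [Finset.Subset.antisymm hBC this]
  | succ k ih =>
    intro B C hcard hBC
    have hne : C \ B ≠ ∅ := by
      intro h; rw [h] at hcard; simp at hcard
    obtain ⟨x, hx⟩ := Finset.nonempty_iff_ne_empty.mpr hne
    obtain ⟨hxC, hxB⟩ := Finset.mem_sdiff.mp hx
    have h1 : a B ≤ a (insert x B) := by
      have := ha_mono B x; unfold margGain at this; linarith
    have h2 : insert x B ⊆ C := Finset.insert_subset hxC hBC
    have h3 : C \ insert x B = (C \ B).erase x := by
      ext y
      simp only [Finset.mem_sdiff, Finset.mem_erase, Finset.mem_insert]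
      tauto
    have h4 : (C \ insert x B).card = k := by
      rw [h3, Finset.card_erase_of_mem hx, hcard]; rfl
    exact h1.trans (ih (insert x B) C h4 h2)


/-- per-step lower bound on the marginal gain of the
α-approximate greedy algorithm:
`Δ_a(x_i ∣ B_i) ≥ (α·γ/n)·(a(B*) − a(B_i))`. -/
theorem approx_greedy_step_gain_bound {X : Type*} [Fintype X] [DecidableEq X]
    (a : Finset X → ℝ)
    (ha_nonneg : ∀ B : Finset X, 0 ≤ a B)
    (ha_mono : ∀ (B : Finset X) (x : X), 0 ≤ margGain a x B)
    (n : ℕ) (hn : 1 ≤ n)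
    (α : ℝ) (hα0 : 0 < α) (hα1 : α ≤ 1)
    (xs : Fin n → X)
    (hgreedy : ∀ i : Fin n, ∀ x : X, x ∉ partialSet xs i →
      α * margGain a x (partialSet xs i) ≤ margGain a (xs i) (partialSet xs i))
    (γ : ℝ) (hγ0 : 0 < γ) (hγ1 : γ ≤ 1)
    (hγ : ∀ S : Finset X, S.card ≤ n → ∀ B' ⊆ partialSet xs n \ S,
      γ * (a (B' ∪ S) - a B') ≤ ∑ x ∈ S, margGain a x B')
    (Bstar : Finset X) (hBstar : Bstar.card = n) :
    ∀ i : Fin n,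
      (α * γ / (n : ℝ)) * (a Bstar - a (partialSet xs i)) ≤
        margGain a (xs i) (partialSet xs i) := by
  intro i
  set Bi := partialSet xs i with hBi
  set S := Bstar \ Bi with hS
  set Δ := margGain a (xs i) Bi with hΔ
  have hΔ0 : 0 ≤ Δ := ha_mono Bi (xs i)
  have hScard : S.card ≤ n := by
    calc S.card ≤ Bstar.card := Finset.card_le_card (Finset.sdiff_subset)
      _ = n := hBstar
  have hBisub : Bi ⊆ partialSet xs n := by
    apply Finset.image_subset_image
    intro j hj
    simp only [Finset.mem_filter, Finset.mem_univ, true_and] at hj ⊢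
    exact j.isLt
  have hBi' : Bi ⊆ partialSet xs n \ S := by
    intro y hy
    refine Finset.mem_sdiff.mpr ⟨hBisub hy, ?_⟩
    simp only [hS, Finset.mem_sdiff]
    tauto
  have hsum := hγ S hScard Bi hBi'
  -- each term in the sum is ≤ Δ/α
  have hterm : ∀ x ∈ S, margGain a x Bi ≤ Δ / α := by
    intro x hx
    have hxBi : x ∉ Bi := (Finset.mem_sdiff.mp hx).2
    have := hgreedy i x hxBi
    rw [le_div_iff₀ hα0]
    linarith [this]
  have hsum2 : ∑ x ∈ S, margGain a x Bi ≤ S.card * (Δ / α) := by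
    calc ∑ x ∈ S, margGain a x Bi ≤ ∑ _x ∈ S, (Δ / α) := Finset.sum_le_sum hterm
      _ = S.card * (Δ / α) := by rw [Finset.sum_const, nsmul_eq_mul]
  have hcardle : (S.card : ℝ) * (Δ / α) ≤ n * (Δ / α) := by
    apply mul_le_mul_of_nonneg_right
    · exact_mod_cast hScard
    · positivity
  have hmono := mono_of_margGain a ha_mono Bstar (Bi ∪ S) (by
    intro y hy
    by_cases h : y ∈ Bi
    · exact Finset.mem_union_left _ h
    · exact Finset.mem_union_right _ (Finset.mem_sdiff.mpr ⟨hy, h⟩))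
  have key : γ * (a Bstar - a Bi) ≤ n * (Δ / α) := by
    calc γ * (a Bstar - a Bi) ≤ γ * (a (Bi ∪ S) - a Bi) := by nlinarith
      _ ≤ ∑ x ∈ S, margGain a x Bi := hsum
      _ ≤ S.card * (Δ / α) := hsum2
      _ ≤ n * (Δ / α) := hcardle
  have hn0 : (0:ℝ) < n := by exact_mod_cast hn
  rw [div_mul_eq_mul_div, div_le_iff₀ hn0]
  have : Δ / α * α = Δ := div_mul_cancel₀ Δ (ne_of_gt hα0)
  nlinarith [key]
end

section
/- Let X be a metric space with distance d, and let B, B' ⊆ X be disjoint finite sets. Then (|B'| − 1)·d(B,B') ≥ |B|·div(B'), where d(B,B') := Σ_{x∈B} Σ_{x'∈B'} d(x,x') and div(B') := (1/2)·d(B',B'). -/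
open Finset

/-- `d(A,B) = Σ_{x∈A} Σ_{x'∈B} d(x,x')`. -/
noncomputable def setDist {X : Type*} [MetricSpace X] (A B : Finset X) : ℝ :=
  ∑ x ∈ A, ∑ x' ∈ B, dist x x'

/-- Sum-dispersion `div(B) = (1/2)·d(B,B)`. -/
noncomputable def sumDisp {X : Type*} [MetricSpace X] (B : Finset X) : ℝ :=
  (1 / 2) * setDist B B

lemma ravi_key {X : Type*} [MetricSpace X] (x : X) (B' : Finset X) :
    ∑ a ∈ B', ∑ b ∈ B', dist a b
      ≤ 2 * ((B'.card : ℝ) - 1) * ∑ b ∈ B', dist x b := by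
  have step : ∀ a ∈ B', ∑ b ∈ B', dist a b
      ≤ ((B'.card : ℝ) - 2) * dist x a + ∑ b ∈ B', dist x b := by
    intro a ha
    classical
    have h1 : ∑ b ∈ B', dist a b = ∑ b ∈ B'.erase a, dist a b := by
      rw [← Finset.add_sum_erase B' _ ha, dist_self, zero_add]
    have h2 : ∑ b ∈ B'.erase a, dist a b
        ≤ ∑ b ∈ B'.erase a, (dist x a + dist x b) := by
      apply Finset.sum_le_sum
      intro b _
      calc dist a b ≤ dist a x + dist x b := dist_triangle a x b
        _ = dist x a + dist x b := by rw [dist_comm a x]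
    have h3 : ∑ b ∈ B'.erase a, (dist x a + dist x b)
        = ((B'.card : ℝ) - 1) * dist x a + ∑ b ∈ B'.erase a, dist x b := by
      rw [Finset.sum_add_distrib, Finset.sum_const, nsmul_eq_mul,
        Finset.card_erase_of_mem ha]
      have hc : (1 : ℕ) ≤ B'.card := Finset.card_pos.mpr ⟨a, ha⟩
      push_cast [hc]
      ring
    have h4 : ∑ b ∈ B'.erase a, dist x b = (∑ b ∈ B', dist x b) - dist x a := by
      rw [← Finset.add_sum_erase B' _ ha]; ring
    rw [h1]
    calc ∑ b ∈ B'.erase a, dist a b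
        ≤ ((B'.card : ℝ) - 1) * dist x a + ((∑ b ∈ B', dist x b) - dist x a) := by
          rw [← h4, ← h3]; exact h2
      _ = ((B'.card : ℝ) - 2) * dist x a + ∑ b ∈ B', dist x b := by ring
  calc ∑ a ∈ B', ∑ b ∈ B', dist a b
      ≤ ∑ a ∈ B', (((B'.card : ℝ) - 2) * dist x a + ∑ b ∈ B', dist x b) :=
        Finset.sum_le_sum step
    _ = ((B'.card : ℝ) - 2) * (∑ a ∈ B', dist x a)
        + (B'.card : ℝ) * ∑ b ∈ B', dist x b := by
        rw [Finset.sum_add_distrib, ← Finset.mul_sum, Finset.sum_const, nsmul_eq_mul]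
    _ = 2 * ((B'.card : ℝ) - 1) * ∑ b ∈ B', dist x b := by ring

/-- Lemma of Ravi et al.: for disjoint finite sets `B, B'`,
`(|B'| − 1)·d(B,B') ≥ |B|·div(B')`. -/
theorem dispersion_ravi_lemma {X : Type*} [MetricSpace X]
    (B B' : Finset X) (hdisj : Disjoint B B') :
    (B.card : ℝ) * sumDisp B' ≤ ((B'.card : ℝ) - 1) * setDist B B' := by
  unfold sumDisp setDist
  have : (B.card : ℝ) * ((1:ℝ)/2 * ∑ a ∈ B', ∑ b ∈ B', dist a b)
      = ∑ _x ∈ B, (1:ℝ)/2 * ∑ a ∈ B', ∑ b ∈ B', dist a b := by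
    rw [Finset.sum_const, nsmul_eq_mul]
  rw [this]
  conv_rhs => rw [Finset.mul_sum]
  apply Finset.sum_le_sum
  intro x _
  have := ravi_key x B'
  nlinarith [this]
end

section
/- Let X be a metric space with distance d, let P, A ⊆ X be finite sets with |P| = n and |A| = i, where 1 ≤ i ≤ n, and set W := P \ A. If |W| > 1, then d(A, W) ≥ (i·|W| / (n·(n−1)))·div(P), where d(A,W) := Σ_{x∈A} Σ_{x'∈W} d(x,x') and div(P) := (1/2)·Σ_{x∈P} Σ_{x'∈P} d(x,x'). -/
open Finset

theorem Finset.sum_sum_erase_add {α R : Type*} [DecidableEq α] [CommRing R]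
    (s : Finset α) (f : α → R) :
    ∑ u ∈ s, ∑ v ∈ s.erase u, (f u + f v) = 2 * ((#s : R) - 1) * ∑ u ∈ s, f u := by
  have h_inner : ∀ u ∈ s,
      ∑ v ∈ s.erase u, (f u + f v) = ((#s : R) - 2) * f u + ∑ v ∈ s, f v := by
    intro u hu
    rw [sum_add_distrib, sum_const, card_erase_of_mem hu, nsmul_eq_mul, sum_erase_eq_sub hu,
      Nat.cast_pred (card_pos.2 ⟨u, hu⟩)]
    ring
  rw [sum_congr rfl h_inner, sum_add_distrib, ← mul_sum, sum_const, nsmul_eq_mul]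
  ring

section SetDist

variable {X : Type*} [MetricSpace X]

theorem setDist_nonneg (A B : Finset X) : 0 ≤ setDist A B :=
  sum_nonneg fun _ _ => sum_nonneg fun _ _ => dist_nonneg

theorem setDist_comm (A B : Finset X) : setDist A B = setDist B A := by
  unfold setDist
  rw [sum_comm]
  simp_rw [dist_comm]

variable [DecidableEq X]

theorem setDist_union_left {A B : Finset X} (h : Disjoint A B) (C : Finset X) :
    setDist (A ∪ B) C = setDist A C + setDist B C :=
  sum_union h

theorem setDist_union_right (A : Finset X) {B C : Finset X} (h : Disjoint B C) :
    setDist A (B ∪ C) = setDist A B + setDist A C := by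
  unfold setDist
  rw [← sum_add_distrib]
  exact sum_congr rfl fun _ _ => sum_union h

theorem setDist_union_self {A B : Finset X} (h : Disjoint A B) :
    setDist (A ∪ B) (A ∪ B) = setDist A A + 2 * setDist A B + setDist B B := by
  rw [setDist_union_left h, setDist_union_right _ h, setDist_union_right _ h, setDist_comm B A]
  ring

theorem setDist_eq_sdiff_add_inter (A P C : Finset X) :
    setDist A C = setDist (A \ P) C + setDist (P ∩ A) C := by
  rw [inter_comm P A, ← setDist_union_left (disjoint_sdiff_inter A P), sdiff_union_inter]

theorem setDist_self_le_two_mul (W : Finset X) (a : X) :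
    setDist W W ≤ 2 * ((#W : ℝ) - 1) * ∑ v ∈ W, dist a v := by
  rw [← sum_sum_erase_add]
  refine sum_le_sum fun u _ => ?_
  rw [← sum_erase _ (dist_self u)]
  exact sum_le_sum fun v _ => dist_triangle_left u v a

theorem card_mul_setDist_self_le (B W : Finset X) :
    #B * setDist W W ≤ 2 * ((#W : ℝ) - 1) * setDist B W := by
  have h := sum_le_sum fun a (_ : a ∈ B) => setDist_self_le_two_mul W a
  rwa [sum_const, nsmul_eq_mul, ← mul_sum] at h

end SetDist

/-- The lemma in the variables `w = |W|`, `k = |K|`, `m = |A \ P|`, `s = d(W,W)`, `t = d(K,K)`,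
`c = d(K,W)`, `e = d(A \ P,W)`, where `W = P \ A` and `K = P ∩ A`. -/
theorem borodin_bound_of_triangle_bounds {w k m s t c e : ℝ} (hw : 1 < w) (hk : 0 ≤ k)
    (hm : 0 ≤ m) (hmw : m ≤ w) (hs : 0 ≤ s) (hks : k * s ≤ 2 * (w - 1) * c)
    (hms : m * s ≤ 2 * (w - 1) * e) (hwt : w * t ≤ 2 * (k - 1) * c) :
    (m + k) * w / ((w + k) * (w + k - 1)) * (1 / 2 * (s + 2 * c + t)) ≤ e + c := by
  have hw1 : 0 < w - 1 := by linarith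
  have hn : 0 < w + k := by linarith
  have hn1 : 0 < w + k - 1 := by linarith
  have hmk : 0 ≤ m + k := by linarith
  rw [div_mul_eq_mul_div, div_le_iff₀ (mul_pos hn hn1), ← mul_le_mul_iff_of_pos_right hw1]
  linear_combination (1 / 2 : ℝ) *
    (mul_le_mul_of_nonneg_left hwt (mul_nonneg hmk hw1.le) +
      mul_le_mul_of_nonneg_left hks (mul_nonneg hn1.le (sub_nonneg.2 hmw)) +
      mul_le_mul_of_nonneg_left hms (mul_pos hn hn1).le +
      mul_nonneg (mul_nonneg (mul_nonneg hmk (by linarith : (0 : ℝ) ≤ w)) hk) hs)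

theorem dispersion_borodin_lemma_general {X : Type*} [MetricSpace X] [DecidableEq X]
    (P A : Finset X) (n i : ℕ)
    (hP : P.card = n) (hA : A.card = i) (hin : i ≤ n)
    (hW : 1 < (P \ A).card) :
    ((i : ℝ) * ((P \ A).card : ℝ) / ((n : ℝ) * ((n : ℝ) - 1))) * sumDisp P ≤
      setDist A (P \ A) := by
  have hn : (n : ℝ) = #(P \ A) + #(P ∩ A) := by
    rw [← hP, ← card_sdiff_add_card_inter P A, Nat.cast_add]
  have hi : (i : ℝ) = #(A \ P) + #(P ∩ A) := by
    rw [← hA, ← card_sdiff_add_card_inter A P, Nat.cast_add, inter_comm]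
  have hmw : #(A \ P) ≤ #(P \ A) := by
    have hA' := card_sdiff_add_card_inter A P
    have hP' := card_sdiff_add_card_inter P A
    rw [inter_comm] at hA'
    omega
  have hsplitP : setDist P P = setDist (P \ A) (P \ A) + 2 * setDist (P ∩ A) (P \ A)
      + setDist (P ∩ A) (P ∩ A) := by
    rw [setDist_comm (P ∩ A), ← setDist_union_self (disjoint_sdiff_inter P A),
      sdiff_union_inter]
  have hKK := card_mul_setDist_self_le (P \ A) (P ∩ A)
  rw [setDist_comm (P \ A) (P ∩ A)] at hKK
  rw [sumDisp, hsplitP, setDist_eq_sdiff_add_inter A P, hn, hi]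
  exact borodin_bound_of_triangle_bounds (by exact_mod_cast hW) (Nat.cast_nonneg _)
    (Nat.cast_nonneg _) (by exact_mod_cast hmw)
    (setDist_nonneg _ _) (card_mul_setDist_self_le _ _) (card_mul_setDist_self_le _ _) hKK

/-- Lemma of Borodin et al.: with `|P| = n`, `|A| = i`,
`1 ≤ i ≤ n`, and `W = P \ A` having more than one element,
`d(A, W) ≥ (i·|W| / (n·(n−1)))·div(P)`. -/
theorem dispersion_borodin_lemma {X : Type*} [MetricSpace X] [DecidableEq X]
    (P A : Finset X) (n i : ℕ)
    (hP : P.card = n) (hA : A.card = i) (hi1 : 1 ≤ i) (hin : i ≤ n)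
    (hW : 1 < (P \ A).card) :
    ((i : ℝ) * ((P \ A).card : ℝ) / ((n : ℝ) * ((n : ℝ) - 1))) * sumDisp P ≤
      setDist A (P \ A) :=
  dispersion_borodin_lemma_general P A n i hP hA hin hW
end
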